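/- arXiv:math/0503463 — 11 statements merged into one kernel-verified Lean document; each statement's English description precedes it below -/
import Mathlib

section
/- For every θ > φ, the supremum Λ*(θ) = sup_{t ∈ ℝ}(θt − Λ(t)) is finite and strictly positive, and it is attained at a unique point t₀, which lies in (0, ∞) and satisfies θ = Λ'(t₀) = λE[ζ e^{t₀ζ}]. -/
/-!
The function `t ↦ θ t - Λ t` has derivative `θ - λ E[ζ e^{tζ}]`. Since
`d/dt E[ζ e^{tζ}] = E[ζ² e^{tζ}] > 0`, this derivative is strictly decreasing, so the function
increases strictly up to any zero of the derivative and decreases strictly after it. At `t = 0`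
the derivative is `θ - φ > 0`, and it tends to `-∞`: for `t ≥ 0` we have
`x e^{tx} ≥ x + t (x⁺)²`, so `E[ζ e^{tζ}]` grows at least linearly with slope `E[(ζ⁺)²] > 0`.
Hence the derivative has exactly one zero `t₀`, it is positive, and `θ t₀ - Λ t₀` exceeds the
value `0` taken at `t = 0`.
-/

open MeasureTheory Real Filter Set ProbabilityTheory

lemma lt_of_hasDerivAt_of_strictAnti {f f' : ℝ → ℝ} (hf : ∀ t, HasDerivAt f (f' t) t)
    (hf' : StrictAnti f') {t₀ t : ℝ} (h₀ : f' t₀ = 0) (ht : t ≠ t₀) : f t < f t₀ := by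
  have hcont : Continuous f := continuous_iff_continuousAt.2 fun t => (hf t).continuousAt
  rcases ht.lt_or_gt with ht | ht
  · refine strictMonoOn_of_hasDerivWithinAt_pos (convex_Iic t₀) hcont.continuousOn
      (fun s _ => (hf s).hasDerivWithinAt) (fun s hs => ?_) ht.le self_mem_Iic ht
    rw [interior_Iic] at hs
    exact h₀ ▸ hf' hs
  · refine strictAntiOn_of_hasDerivWithinAt_neg (convex_Ici t₀) hcont.continuousOn
      (fun s _ => (hf s).hasDerivWithinAt) (fun s hs => ?_) self_mem_Ici ht.le ht
    rw [interior_Ici] at hs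
    exact h₀ ▸ hf' hs

lemma add_mul_max_sq_le_mul_exp_mul {t : ℝ} (ht : 0 ≤ t) (x : ℝ) :
    x + t * max x 0 ^ 2 ≤ x * exp (t * x) := by
  rcases le_or_gt 0 x with hx | hx
  · have := add_one_le_exp (t * x)
    rw [max_eq_left hx]
    nlinarith
  · rw [max_eq_right hx.le]
    have : exp (t * x) ≤ 1 := exp_le_one_iff.2 (mul_nonpos_of_nonneg_of_nonpos ht hx.le)
    nlinarith

namespace ProbabilityTheory

variable {Ω : Type*} [MeasurableSpace Ω] {μ : Measure Ω} {X : Ω → ℝ}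

lemma mem_interior_integrableExpSet_of_forall
    (hX : ∀ t, Integrable (fun ω => exp (t * X ω)) μ) (t : ℝ) :
    t ∈ interior (integrableExpSet X μ) := by
  rw [show integrableExpSet X μ = univ from eq_univ_of_forall hX, interior_univ]
  exact mem_univ t

lemma hasDerivAt_integral_mul_exp (hX : ∀ t, Integrable (fun ω => exp (t * X ω)) μ) (t : ℝ) :
    HasDerivAt (fun t => μ[fun ω => X ω * exp (t * X ω)])
      μ[fun ω => X ω ^ 2 * exp (t * X ω)] t := by
  simpa using hasDerivAt_integral_pow_mul_exp_real (mem_interior_integrableExpSet_of_forall hX t) 1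

lemma strictMono_integral_mul_exp (hX : ∀ t, Integrable (fun ω => exp (t * X ω)) μ)
    (hX₀ : μ {ω | X ω ≠ 0} ≠ 0) :
    StrictMono fun t => μ[fun ω => X ω * exp (t * X ω)] := by
  refine strictMono_of_hasDerivAt_pos (hasDerivAt_integral_mul_exp hX) fun t => ?_
  have hint := integrable_pow_mul_exp_of_mem_interior_integrableExpSet
    (mem_interior_integrableExpSet_of_forall hX t) 2
  rw [integral_pos_iff_support_of_nonneg (fun ω => by positivity) hint]
  convert pos_iff_ne_zero.2 hX₀ using 3
  ext ω
  simp [exp_ne_zero]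

lemma tendsto_integral_mul_exp_atTop (hX : ∀ t, Integrable (fun ω => exp (t * X ω)) μ)
    (hXpos : μ {ω | 0 < X ω} ≠ 0) :
    Tendsto (fun t => μ[fun ω => X ω * exp (t * X ω)]) atTop atTop := by
  have hint := mem_interior_integrableExpSet_of_forall hX
  have hX₁ : Integrable X μ := integrable_of_mem_interior_integrableExpSet (hint 0)
  have hX₂ : Integrable (fun ω => max (X ω) 0 ^ 2) μ := by
    refine (integrable_pow_of_mem_interior_integrableExpSet (hint 0) 2).mono'
      (hX₁.pos_part.aestronglyMeasurable.pow 2) (ae_of_all _ fun ω => ?_)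
    rcases le_total 0 (X ω) with h | h <;> simp [h, sq_nonneg]
  have hpos : 0 < μ[fun ω => max (X ω) 0 ^ 2] := by
    rw [integral_pos_iff_support_of_nonneg (fun ω => by positivity) hX₂]
    convert pos_iff_ne_zero.2 hXpos using 3
    ext ω
    simp
  have hlin : Tendsto (fun t => μ[X] + t * μ[fun ω => max (X ω) 0 ^ 2]) atTop atTop :=
    tendsto_atTop_add_const_left _ _ (tendsto_id.atTop_mul_const hpos)
  refine tendsto_atTop_mono' _ ?_ hlin
  filter_upwards [eventually_ge_atTop 0] with t ht
  rw [← integral_const_mul, ← integral_add hX₁ (hX₂.const_mul t)]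
  exact integral_mono (hX₁.add (hX₂.const_mul t))
    (integrable_pow_mul_exp_of_mem_interior_integrableExpSet (hint t) 1 |>.congr (by simp))
    fun ω => add_mul_max_sq_le_mul_exp_mul ht (X ω)

end ProbabilityTheory

/-- Let ζ be a bounded real random variable with P{ζ > 0} > 0, λ > 0,
Λ(t) = λ(E[e^{tζ}] − 1) and φ = λE[ζ]. For every θ > φ, the supremum
Λ*(θ) = sup_t (θt − Λ(t)) is finite and strictly positive, attained at a unique point t₀,
which lies in (0,∞) and satisfies θ = Λ'(t₀) = λE[ζ e^{t₀ζ}]. -/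
theorem stmt1
    {Ω : Type*} [MeasurableSpace Ω] (μ : Measure Ω) [IsProbabilityMeasure μ]
    (ζ : Ω → ℝ) (hmeas : Measurable ζ) (M : ℝ) (hbdd : ∀ ω, |ζ ω| ≤ M)
    (hpos : 0 < μ {ω | 0 < ζ ω})
    (lam : ℝ) (hlam : 0 < lam)
    (Λ : ℝ → ℝ) (hΛ : ∀ t, Λ t = lam * ((∫ ω, Real.exp (t * ζ ω) ∂μ) - 1))
    (φ : ℝ) (hφ : φ = lam * ∫ ω, ζ ω ∂μ)
    (θ : ℝ) (hθ : φ < θ) :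
    ∃ t₀ : ℝ,
      (0 < t₀) ∧
      (∀ t : ℝ, θ * t - Λ t ≤ θ * t₀ - Λ t₀) ∧
      (∀ t : ℝ, (∀ s : ℝ, θ * s - Λ s ≤ θ * t - Λ t) → t = t₀) ∧
      (0 < θ * t₀ - Λ t₀) ∧
      HasDerivAt Λ θ t₀ ∧
      θ = lam * ∫ ω, ζ ω * Real.exp (t₀ * ζ ω) ∂μ := by
  have hexp : ∀ t, Integrable (fun ω => exp (t * ζ ω)) μ := fun t =>
    integrable_exp_mul_of_mem_Icc hmeas.aemeasurable (ae_of_all _ fun ω => abs_le.1 (hbdd ω))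
  set D := fun t => lam * μ[fun ω => ζ ω * exp (t * ζ ω)] with hD
  have hΛ' : ∀ t, HasDerivAt Λ (D t) t := fun t => by
    rw [funext hΛ]
    have := hasDerivAt_mgf (mem_interior_integrableExpSet_of_forall hexp t)
    exact (this.sub_const 1).const_mul lam
  have hD_mono : StrictMono D := (strictMono_integral_mul_exp hexp
    (hpos.trans_le (measure_mono fun ω h => ne_of_gt h)).ne').const_mul hlam
  have hD_top : Tendsto D atTop atTop :=
    (tendsto_integral_mul_exp_atTop hexp hpos.ne').const_mul_atTop hlam
  have hD_cont : Continuous D :=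
    continuous_iff_continuousAt.2 fun t =>
      ((hasDerivAt_integral_mul_exp hexp t).const_mul lam).continuousAt
  obtain ⟨t₀, ht₀, hDt₀⟩ : ∃ t₀ ∈ Ioi (0 : ℝ), D t₀ = θ :=
    intermediate_value_Ioi hD_cont.continuousOn hD_top (by simpa [hD, ← hφ] using hθ)
  have hmax : ∀ t ≠ t₀, θ * t - Λ t < θ * t₀ - Λ t₀ := fun t =>
    lt_of_hasDerivAt_of_strictAnti (fun s => ((hasDerivAt_id s).const_mul θ).sub (hΛ' s))
      (fun r s h => by simpa using hD_mono h) (by rw [mul_one, hDt₀, sub_self])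
  refine ⟨t₀, ht₀, fun t => ?_, fun t ht => ?_, ?_, hDt₀ ▸ hΛ' t₀, hDt₀.symm⟩
  · rcases eq_or_ne t t₀ with rfl | h
    exacts [le_rfl, (hmax t h).le]
  · by_contra h
    exact (ht t₀).not_gt (hmax t h)
  · simpa [hΛ] using hmax 0 ht₀.ne
end

section
/- The Legendre transform Λ* is finite, strictly positive, continuous, strictly increasing and convex on the open interval (φ, ∞). -/
/-!
Since `exp x ≥ 1 + x`, `Λ t ≥ φ t`; so `Λ*(φ) ≤ 0`, and for `θ ≥ φ` the values `θ t - Λ t` with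
`t ≤ 0` are nonpositive. For `t ≥ 0`, `Λ` grows quadratically because `ζ ≥ ε > 0` with positive
probability, so the supremum is finite on `[φ, ∞)`. As a supremum of affine functions `Λ*` is
convex there, hence continuous on the open interval. Since `Λ 0 = 0` and `Λ' 0 = φ`, for `θ > φ`
some small `t > 0` has `θ t - Λ t > 0`. A convex function on `[φ, ∞)` that is larger everywhere
on `(φ, ∞)` than at `φ` is strictly increasing.
-/

open MeasureTheory Real Set

open Filter Topology ProbabilityTheory

noncomputable def legendre (Λ : ℝ → ℝ) (θ : ℝ) : ℝ := ⨆ t : ℝ, θ * t - Λ t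

theorem ConvexOn.strictMonoOn_Ici_of_lt {𝕜 : Type*} [Field 𝕜] [LinearOrder 𝕜]
    [IsStrictOrderedRing 𝕜] {f : 𝕜 → 𝕜} {a : 𝕜} (hf : ConvexOn 𝕜 (Ici a) f)
    (h : ∀ x ∈ Ioi a, f a < f x) : StrictMonoOn f (Ici a) := by
  intro y hy z hz hyz
  rcases (mem_Ici.1 hy).eq_or_lt with rfl | hay
  · exact h z hyz
  have hsec := hf.secant_mono_aux1 self_mem_Ici hz hay hyz
  nlinarith [h z (hay.trans hyz)]

section Legendre

variable {Λ : ℝ → ℝ} {φ θ : ℝ}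

theorem le_legendre (h : BddAbove (range fun t => θ * t - Λ t)) (t : ℝ) :
    θ * t - Λ t ≤ legendre Λ θ :=
  le_ciSup h t

theorem convexOn_legendre {s : Set ℝ} (hs : Convex ℝ s)
    (hbdd : ∀ θ ∈ s, BddAbove (range fun t => θ * t - Λ t)) : ConvexOn ℝ s (legendre Λ) := by
  refine ⟨hs, fun x hx y hy a b ha hb hab => ciSup_le fun t => ?_⟩
  have hsplit : (a • x + b • y) * t - Λ t = a * (x * t - Λ t) + b * (y * t - Λ t) := by
    rw [smul_eq_mul, smul_eq_mul, eq_sub_of_add_eq' hab]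
    ring
  rw [hsplit, smul_eq_mul, smul_eq_mul]
  gcongr
  exacts [le_legendre (hbdd x hx) t, le_legendre (hbdd y hy) t]

theorem legendre_nonpos (hlow : ∀ t, φ * t ≤ Λ t) : legendre Λ φ ≤ 0 :=
  ciSup_le fun t => sub_nonpos.2 (hlow t)

theorem bddAbove_of_quadratic_growth (hlow : ∀ t, φ * t ≤ Λ t) {c C : ℝ} (hc : 0 < c)
    (hgrowth : ∀ t, 0 ≤ t → c * t ^ 2 - C ≤ Λ t) (hθ : φ ≤ θ) :
    BddAbove (range fun t => θ * t - Λ t) := by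
  refine ⟨θ ^ 2 / (4 * c) + |C|, ?_⟩
  rintro _ ⟨t, rfl⟩
  have hbound : 0 ≤ θ ^ 2 / (4 * c) := by positivity
  rcases le_total t 0 with ht | ht
  · nlinarith [hlow t, abs_nonneg C]
  · have hsq : θ * t - c * t ^ 2 ≤ θ ^ 2 / (4 * c) := by
      rw [le_div_iff₀ (by positivity)]
      nlinarith [sq_nonneg (2 * c * t - θ)]
    linarith [hgrowth t ht, le_abs_self C]

theorem legendre_pos (hbdd : BddAbove (range fun t => θ * t - Λ t)) (hΛ0 : Λ 0 = 0)
    (hderiv : HasDerivAt Λ φ 0) (hθ : φ < θ) : 0 < legendre Λ θ := by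
  have hslope : ∀ᶠ t in 𝓝[>] 0, t⁻¹ * Λ t < θ ∧ 0 < t := by
    refine Eventually.and ?_ self_mem_nhdsWithin
    simpa [hΛ0] using hderiv.tendsto_slope_zero_right.eventually (gt_mem_nhds hθ)
  obtain ⟨t, hlt, ht⟩ := hslope.exists
  rw [inv_mul_lt_iff₀ ht] at hlt
  linarith [le_legendre hbdd t]

end Legendre

section MGF

variable {Ω : Type*} [MeasurableSpace Ω] {μ : Measure Ω} {X : Ω → ℝ} {t : ℝ}

theorem integrableExpSet_eq_univ_of_abs_le [IsFiniteMeasure μ] (hX : AEMeasurable X μ) {M : ℝ}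
    (hM : ∀ ω, |X ω| ≤ M) : integrableExpSet X μ = univ :=
  eq_univ_of_forall fun _ => integrable_exp_mul_of_mem_Icc hX (ae_of_all _ fun ω => abs_le.1 (hM ω))

theorem hasDerivAt_mgf_zero (h : 0 ∈ interior (integrableExpSet X μ)) :
    HasDerivAt (mgf X μ) μ[X] 0 := by
  simpa using hasDerivAt_mgf h

theorem one_add_mul_integral_le_mgf [IsProbabilityMeasure μ] (hX : Integrable X μ)
    (h_int : Integrable (fun ω => exp (t * X ω)) μ) : 1 + t * μ[X] ≤ mgf X μ t := by
  calc 1 + t * μ[X] = ∫ ω, (1 + t * X ω) ∂μ := by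
        rw [integral_add (integrable_const 1) (hX.const_mul t), integral_const_mul]
        simp
    _ ≤ mgf X μ t :=
        integral_mono ((integrable_const 1).add (hX.const_mul t)) h_int
          fun ω => by simpa [add_comm] using add_one_le_exp (t * X ω)

theorem measureReal_ge_mul_sq_le_mgf [IsFiniteMeasure μ] {ε : ℝ} (hε : 0 ≤ ε) (ht : 0 ≤ t)
    (h_int : Integrable (fun ω => exp (t * X ω)) μ) :
    μ.real {ω | ε ≤ X ω} * ((ε * t) ^ 2 / 2) ≤ mgf X μ t := by
  have hchernoff := measure_ge_le_exp_mul_mgf ε ht h_int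
  have hexp : (ε * t) ^ 2 / 2 ≤ exp (t * ε) := by
    nlinarith [quadratic_le_exp_of_nonneg (mul_nonneg ht hε)]
  calc μ.real {ω | ε ≤ X ω} * ((ε * t) ^ 2 / 2)
      ≤ exp (-t * ε) * mgf X μ t * exp (t * ε) :=
        mul_le_mul hchernoff hexp (by positivity) (measureReal_nonneg.trans hchernoff)
    _ = mgf X μ t := by rw [mul_right_comm, ← exp_add]; simp

theorem exists_pos_measureReal_ge_of_measure_pos [IsFiniteMeasure μ]
    (hpos : 0 < μ {ω | 0 < X ω}) : ∃ ε > 0, 0 < μ.real {ω | ε ≤ X ω} := by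
  have hunion : {ω | 0 < X ω} = ⋃ n : ℕ, {ω | 1 / ((n : ℝ) + 1) ≤ X ω} := by
    ext ω
    simp only [mem_ofPred_eq, mem_iUnion]
    exact ⟨fun h => (exists_nat_one_div_lt h).imp fun _ => le_of_lt,
      fun ⟨n, hn⟩ => lt_of_lt_of_le Nat.one_div_pos_of_nat hn⟩
  rw [hunion] at hpos
  obtain ⟨n, hn⟩ := exists_measure_pos_of_not_measure_iUnion_null hpos.ne'
  exact ⟨_, Nat.one_div_pos_of_nat, ENNReal.toReal_pos hn.ne' (measure_ne_top μ _)⟩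

end MGF

/-- Let ζ be a bounded real random variable with P{ζ > 0} > 0, λ > 0,
Λ(t) = λ(E[e^{tζ}] − 1), φ = λE[ζ] and Λ*(θ) = sup_t (θt − Λ(t)). Then Λ* is finite,
strictly positive, continuous, strictly increasing and convex on the open interval (φ, ∞). -/
theorem stmt2
    {Ω : Type*} [MeasurableSpace Ω] (μ : Measure Ω) [IsProbabilityMeasure μ]
    (ζ : Ω → ℝ) (hmeas : Measurable ζ) (M : ℝ) (hbdd : ∀ ω, |ζ ω| ≤ M)
    (hpos : 0 < μ {ω | 0 < ζ ω})
    (lam : ℝ) (hlam : 0 < lam)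
    (Λ : ℝ → ℝ) (hΛ : ∀ t, Λ t = lam * ((∫ ω, Real.exp (t * ζ ω) ∂μ) - 1))
    (φ : ℝ) (hφ : φ = lam * ∫ ω, ζ ω ∂μ)
    (Λstar : ℝ → ℝ) (hΛstar : ∀ θ, Λstar θ = ⨆ t : ℝ, (θ * t - Λ t)) :
    (∀ θ ∈ Ioi φ, BddAbove (Set.range fun t : ℝ => θ * t - Λ t)) ∧
    (∀ θ ∈ Ioi φ, 0 < Λstar θ) ∧
    ContinuousOn Λstar (Ioi φ) ∧
    StrictMonoOn Λstar (Ioi φ) ∧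
    ConvexOn ℝ (Ioi φ) Λstar := by
  obtain rfl : Λ = fun t => lam * (mgf ζ μ t - 1) := funext hΛ
  obtain rfl : Λstar = legendre _ := funext hΛstar
  have hexpSet := integrableExpSet_eq_univ_of_abs_le (μ := μ) hmeas.aemeasurable hbdd
  have hint (t : ℝ) : Integrable (fun ω => exp (t * ζ ω)) μ :=
    integrable_of_mem_integrableExpSet (by simp [hexpSet])
  have hζ : Integrable ζ μ :=
    .of_bound hmeas.aestronglyMeasurable M (ae_of_all _ fun ω => (hbdd ω).trans_eq' rfl)
  have hlow (t : ℝ) : φ * t ≤ lam * (mgf ζ μ t - 1) := by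
    rw [hφ]
    nlinarith [one_add_mul_integral_le_mgf (t := t) hζ (hint t)]
  obtain ⟨ε, hε, hp⟩ := exists_pos_measureReal_ge_of_measure_pos (μ := μ) hpos
  have hgrowth (t : ℝ) (ht : 0 ≤ t) :
      lam * μ.real {ω | ε ≤ ζ ω} * ε ^ 2 / 2 * t ^ 2 - lam ≤ lam * (mgf ζ μ t - 1) := by
    nlinarith [measureReal_ge_mul_sq_le_mgf hε.le ht (hint t)]
  have hbddAbove (θ : ℝ) (hθ : θ ∈ Ici φ) := bddAbove_of_quadratic_growth hlow (by positivity)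
    hgrowth hθ
  have hderiv : HasDerivAt (fun t => lam * (mgf ζ μ t - 1)) φ 0 := by
    simpa [hφ] using ((hasDerivAt_mgf_zero (by simp [hexpSet])).sub_const 1).const_mul lam
  have hlegendre_pos (θ : ℝ) (hθ : θ ∈ Ioi φ) : 0 < legendre _ θ :=
    legendre_pos (hbddAbove θ (Ioi_subset_Ici_self hθ)) (by simp) hderiv hθ
  have hconvex := convexOn_legendre (convex_Ici φ) hbddAbove
  have hconvexIoi := hconvex.subset Ioi_subset_Ici_self (convex_Ioi φ)
  refine ⟨fun θ hθ => hbddAbove θ (Ioi_subset_Ici_self hθ), hlegendre_pos,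
    hconvexIoi.continuousOn isOpen_Ioi, ?_, hconvexIoi⟩
  refine (hconvex.strictMonoOn_Ici_of_lt fun θ hθ => ?_).mono Ioi_subset_Ici_self
  exact (legendre_nonpos hlow).trans_lt (hlegendre_pos θ hθ)
end

section
/- |E[ζ e^{⟨t,ζ⟩}]| → ∞ as |t| → ∞; equivalently, the gradient ∇Λ(t) = λE[ζ e^{⟨t,ζ⟩}] has norm tending to infinity as |t| → ∞. -/
/-!
Write `t = r u` with `r = ‖t‖`, `‖u‖ = 1`, and project onto `u`: the norm is at least
`E[e^{r⟨u,ζ⟩} ⟨u,ζ⟩]`. For `|x| ≤ M` and `ε ≥ 0` one has the pointwise bound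
`e^{rx} x ≥ ε e^{rε} (min(1, x⁺) - ε) - M`, so the norm is at least `ε e^{rε} (h(u) - ε) - M`
with `h(u) = E[min(1, ⟨u,ζ⟩⁺)]`. The function `h` is continuous and, by the hypothesis on `ζ`,
positive on the unit sphere, hence at least some `c > 0` there by compactness; `ε = c/2` gives
the lower bound `(c/2)² e^{rc/2} - M`, which tends to infinity with `r`.
-/

open MeasureTheory Real Filter
open scoped RealInnerProductSpace

lemma clip_sub_le_exp_mul_mul {r ε x M : ℝ} (hr : 0 ≤ r) (hε : 0 ≤ ε) (hx : |x| ≤ M) :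
    ε * exp (r * ε) * (min 1 (max x 0) - ε) - M ≤ exp (r * x) * x := by
  have hpos : 0 ≤ ε * exp (r * ε) := by positivity
  obtain ⟨hMx, hxM⟩ := abs_le.1 hx
  rcases le_or_gt x 0 with hx0 | hx0
  · have : exp (r * x) ≤ 1 := exp_le_one_iff.2 (mul_nonpos_of_nonneg_of_nonpos hr hx0)
    have : min 1 (max x 0) = 0 := by simp [hx0]
    nlinarith
  rcases le_or_gt x ε with hxε | hxε
  · have : min 1 (max x 0) ≤ ε := (min_le_right _ _).trans (by simp [hx0.le, hxε])
    nlinarith [mul_pos (exp_pos (r * x)) hx0]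
  · have hexp : exp (r * ε) ≤ exp (r * x) := exp_le_exp.2 (by nlinarith)
    have : min 1 (max x 0) ≤ 1 := min_le_left _ _
    nlinarith [mul_le_mul hexp hxε.le hε (exp_pos _).le]

lemma abs_clip_le_one (x : ℝ) : |min 1 (max x 0)| ≤ 1 := by
  rw [abs_le]
  constructor <;> simp

section

variable {Ω E : Type*} [MeasurableSpace Ω] [NormedAddCommGroup E] [InnerProductSpace ℝ E]

noncomputable def clippedInnerMean (μ : Measure Ω) (ζ : Ω → E) (u : E) : ℝ :=
  ∫ ω, min 1 (max ⟪u, ζ ω⟫ 0) ∂μ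

variable {μ : Measure Ω} [IsFiniteMeasure μ] {ζ : Ω → E}

lemma integrable_clip_inner (hζ : AEStronglyMeasurable ζ μ) (u : E) :
    Integrable (fun ω => min 1 (max ⟪u, ζ ω⟫ 0)) μ :=
  .of_bound (by fun_prop) 1 (.of_forall fun ω => abs_clip_le_one _)

lemma continuous_clippedInnerMean (hζ : AEStronglyMeasurable ζ μ) :
    Continuous (clippedInnerMean μ ζ) :=
  continuous_of_dominated (fun u => (integrable_clip_inner hζ u).aestronglyMeasurable)
    (fun u => .of_forall fun ω => abs_clip_le_one _) (integrable_const 1)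
    (.of_forall fun ω => by fun_prop)

lemma clippedInnerMean_pos (hζ : AEStronglyMeasurable ζ μ) {u : E}
    (hu : 0 < μ {ω | 0 < ⟪u, ζ ω⟫}) : 0 < clippedInnerMean μ ζ u := by
  refine (integral_pos_iff_support_of_nonneg (fun ω => by simp) (integrable_clip_inner hζ u)).2 ?_
  convert hu using 2
  ext ω
  simp only [Function.mem_support, Set.mem_ofPred_eq]
  constructor
  · intro h; by_contra h'; exact h (by simp [not_lt.1 h'])
  · intro h; exact (lt_min one_pos (lt_max_of_lt_left h)).ne'

lemma exists_pos_le_clippedInnerMean_of_mem_sphere [FiniteDimensional ℝ E]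
    (hζ : AEStronglyMeasurable ζ μ) (hpos : ∀ v : E, v ≠ 0 → 0 < μ {ω | 0 < ⟪v, ζ ω⟫}) :
    ∃ c > 0, ∀ u ∈ Metric.sphere (0 : E) 1, c ≤ clippedInnerMean μ ζ u :=
  (isCompact_sphere 0 1).exists_forall_le' (continuous_clippedInnerMean hζ).continuousOn
    fun u hu => clippedInnerMean_pos hζ (hpos u (ne_zero_of_mem_unit_sphere ⟨u, hu⟩))

lemma integrable_exp_inner_smul (hζ : AEStronglyMeasurable ζ μ) {M : ℝ}
    (hbdd : ∀ ω, ‖ζ ω‖ ≤ M) (t : E) : Integrable (fun ω => exp ⟪t, ζ ω⟫ • ζ ω) μ := by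
  refine .of_bound (by fun_prop) (exp (‖t‖ * M) * M) (.of_forall fun ω => ?_)
  rw [norm_smul, norm_of_nonneg (exp_pos _).le]
  have hinner : ⟪t, ζ ω⟫ ≤ ‖t‖ * M :=
    (real_inner_le_norm t (ζ ω)).trans (mul_le_mul_of_nonneg_left (hbdd ω) (norm_nonneg t))
  gcongr
  exact hbdd ω

lemma le_norm_integral_exp_inner_smul [IsProbabilityMeasure μ] [CompleteSpace E]
    (hζ : AEStronglyMeasurable ζ μ) {M : ℝ} (hbdd : ∀ ω, ‖ζ ω‖ ≤ M) {u : E} (hu : ‖u‖ = 1)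
    {r ε : ℝ} (hr : 0 ≤ r) (hε : 0 ≤ ε) :
    ε * exp (r * ε) * (clippedInnerMean μ ζ u - ε) - M ≤
      ‖∫ ω, exp ⟪r • u, ζ ω⟫ • ζ ω ∂μ‖ := by
  have hint := integrable_exp_inner_smul hζ hbdd (r • u)
  have hproj : (fun ω => exp (r * ⟪u, ζ ω⟫) * ⟪u, ζ ω⟫) =
      fun ω => ⟪u, exp ⟪r • u, ζ ω⟫ • ζ ω⟫ := by
    ext ω
    rw [real_inner_smul_right, real_inner_smul_left]
  have hbound : ∀ ω, |⟪u, ζ ω⟫| ≤ M := fun ω =>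
    (abs_real_inner_le_norm u (ζ ω)).trans (by rw [hu, one_mul]; exact hbdd ω)
  calc ε * exp (r * ε) * (clippedInnerMean μ ζ u - ε) - M
      = ∫ ω, (ε * exp (r * ε) * (min 1 (max ⟪u, ζ ω⟫ 0) - ε) - M) ∂μ := by
        rw [integral_sub _ (integrable_const M), integral_const_mul, integral_sub
          (integrable_clip_inner hζ u) (integrable_const ε)]
        · simp [clippedInnerMean]
        · exact ((integrable_clip_inner hζ u).sub (integrable_const ε)).const_mul _
    _ ≤ ∫ ω, exp (r * ⟪u, ζ ω⟫) * ⟪u, ζ ω⟫ ∂μ := by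
        refine integral_mono (((integrable_clip_inner hζ u).sub (integrable_const ε)).const_mul _
          |>.sub (integrable_const M)) (hproj ▸ hint.const_inner u) fun ω => ?_
        exact clip_sub_le_exp_mul_mul hr hε (hbound ω)
    _ = ⟪u, ∫ ω, exp ⟪r • u, ζ ω⟫ • ζ ω ∂μ⟫ := by rw [hproj, integral_inner hint]
    _ ≤ ‖∫ ω, exp ⟪r • u, ζ ω⟫ • ζ ω ∂μ‖ := by
        simpa [hu] using real_inner_le_norm u (∫ ω, exp ⟪r • u, ζ ω⟫ • ζ ω ∂μ)

end

theorem stmt3_general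
    {Ω : Type*} [MeasurableSpace Ω] (μ : Measure Ω) [IsProbabilityMeasure μ]
    (n : ℕ)
    (ζ : Ω → EuclideanSpace ℝ (Fin n)) (hmeas : Measurable ζ)
    (M : ℝ) (hbdd : ∀ ω, ‖ζ ω‖ ≤ M)
    (hpos : ∀ v : EuclideanSpace ℝ (Fin n), v ≠ 0 → 0 < μ {ω | 0 < ⟪v, ζ ω⟫}) :
    Tendsto (fun t : EuclideanSpace ℝ (Fin n) =>
        ‖∫ ω, Real.exp ⟪t, ζ ω⟫ • ζ ω ∂μ‖)
      (Bornology.cobounded (EuclideanSpace ℝ (Fin n))) atTop := by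
  have hζ := hmeas.aestronglyMeasurable (μ := μ)
  obtain ⟨c, hc, hcu⟩ := exists_pos_le_clippedInnerMean_of_mem_sphere hζ hpos
  have hlower : ∀ t ≠ 0, c / 2 * exp (‖t‖ * (c / 2)) * (c / 2) - M ≤
      ‖∫ ω, exp ⟪t, ζ ω⟫ • ζ ω ∂μ‖ := by
    intro t ht
    have hu : ‖‖t‖⁻¹ • t‖ = 1 := norm_smul_inv_norm ht
    have h := le_norm_integral_exp_inner_smul hζ hbdd hu (norm_nonneg t) (half_pos hc).le
    rw [smul_inv_smul₀ (norm_ne_zero_iff.2 ht)] at h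
    refine le_trans ?_ h
    have hcu' := hcu _ (mem_sphere_zero_iff_norm.2 hu)
    gcongr
    linarith
  have hgrowth : Tendsto (fun r => c / 2 * exp (r * (c / 2)) * (c / 2) - M) atTop atTop :=
    tendsto_atTop_add_const_right _ _ <|
      ((tendsto_exp_atTop.comp (tendsto_id.atTop_mul_const (half_pos hc))).const_mul_atTop
        (half_pos hc)).atTop_mul_const (half_pos hc)
  refine tendsto_atTop_mono' _ ?_ (hgrowth.comp tendsto_norm_cobounded_atTop)
  filter_upwards [tendsto_norm_cobounded_atTop.eventually (eventually_gt_atTop 0)] with t ht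
  exact hlower t (norm_pos_iff.1 ht)

/-- Let ζ be a bounded ℝ^n-valued random variable (n ≥ 1) such that
P{⟨v,ζ⟩ > 0} > 0 for every v ≠ 0. Then |E[ζ e^{⟨t,ζ⟩}]| → ∞ as |t| → ∞. -/
theorem stmt3
    {Ω : Type*} [MeasurableSpace Ω] (μ : Measure Ω) [IsProbabilityMeasure μ]
    (n : ℕ) (hn : 1 ≤ n)
    (ζ : Ω → EuclideanSpace ℝ (Fin n)) (hmeas : Measurable ζ)
    (M : ℝ) (hbdd : ∀ ω, ‖ζ ω‖ ≤ M)
    (hpos : ∀ v : EuclideanSpace ℝ (Fin n), v ≠ 0 → 0 < μ {ω | 0 < ⟪v, ζ ω⟫}) :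
    Tendsto (fun t : EuclideanSpace ℝ (Fin n) =>
        ‖∫ ω, Real.exp ⟪t, ζ ω⟫ • ζ ω ∂μ‖)
      (Bornology.cobounded (EuclideanSpace ℝ (Fin n))) atTop :=
  stmt3_general μ n ζ hmeas M hbdd hpos
end

section
/- For every a > 1, the sublevel set V = {t ∈ ℝ^n : E[e^{⟨t,ζ⟩}] ≤ a} of the moment generating function is bounded. -/
/-!
The function `f v = 𝔼[⟨v, ζ⟩⁺]` is Lipschitz, positively homogeneous and, by the hypothesis on `ζ`,
positive off the origin; its minimum `c` on the unit sphere is therefore positive and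
`c ‖t‖ ≤ f t`. Since `x⁺ ≤ eˣ`, every `t` in the sublevel set satisfies `c ‖t‖ ≤ 𝔼[e^⟨t, ζ⟩] ≤ a`.
-/

open MeasureTheory Real
open scoped RealInnerProductSpace

theorem exists_pos_mul_norm_le_of_continuous_of_posHomogeneous
    {E : Type*} [NormedAddCommGroup E] [NormedSpace ℝ E] [FiniteDimensional ℝ E]
    {f : E → ℝ} (hf : Continuous f) (hhom : ∀ c : ℝ, 0 ≤ c → ∀ v, f (c • v) = c * f v)
    (hpos : ∀ v, v ≠ 0 → 0 < f v) :
    ∃ c > 0, ∀ v, c * ‖v‖ ≤ f v := by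
  have hf0 : f 0 = 0 := by simpa using hhom 0 le_rfl 0
  rcases subsingleton_or_nontrivial E with hE | hE
  · exact ⟨1, one_pos, fun v => by simp [Subsingleton.elim v 0, hf0]⟩
  obtain ⟨v₀, hv₀, hmin⟩ := (isCompact_sphere (0 : E) 1).exists_isMinOn
    (NormedSpace.sphere_nonempty.mpr zero_le_one) hf.continuousOn
  have hv₀ : ‖v₀‖ = 1 := mem_sphere_zero_iff_norm.mp hv₀
  refine ⟨f v₀, hpos v₀ (norm_ne_zero_iff.mp (by simp [hv₀])), fun v => ?_⟩
  rcases eq_or_ne v 0 with rfl | hv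
  · simp [hf0]
  have hnv : 0 < ‖v‖ := norm_pos_iff.mpr hv
  have hu : ‖v‖⁻¹ • v ∈ Metric.sphere (0 : E) 1 := by
    rw [mem_sphere_zero_iff_norm, norm_smul, norm_inv, norm_norm, inv_mul_cancel₀ hnv.ne']
  calc f v₀ * ‖v‖ ≤ f (‖v‖⁻¹ • v) * ‖v‖ := mul_le_mul_of_nonneg_right (hmin hu) hnv.le
    _ = f v := by
      rw [hhom _ (inv_nonneg.mpr hnv.le), mul_comm, ← mul_assoc, mul_inv_cancel₀ hnv.ne', one_mul]

section InnerPosPart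

variable {Ω E : Type*} [MeasurableSpace Ω] {μ : Measure Ω}
  [NormedAddCommGroup E] [InnerProductSpace ℝ E] {ζ : Ω → E}

noncomputable def expectedInnerPosPart (μ : Measure Ω) (ζ : Ω → E) (v : E) : ℝ :=
  ∫ ω, max ⟪v, ζ ω⟫ 0 ∂μ

theorem integrable_inner_posPart (hζ : Integrable ζ μ) (v : E) :
    Integrable (fun ω => max ⟪v, ζ ω⟫ 0) μ :=
  (hζ.const_inner v).pos_part

theorem lipschitzWith_expectedInnerPosPart (hζ : Integrable ζ μ) :
    LipschitzWith (∫ ω, ‖ζ ω‖ ∂μ).toNNReal (expectedInnerPosPart μ ζ) := by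
  refine LipschitzWith.of_dist_le_mul fun v w => ?_
  have hpoint : ∀ ω, ‖max ⟪v, ζ ω⟫ 0 - max ⟪w, ζ ω⟫ 0‖ ≤ dist v w * ‖ζ ω‖ := fun ω =>
    calc ‖max ⟪v, ζ ω⟫ 0 - max ⟪w, ζ ω⟫ 0‖ ≤ |⟪v, ζ ω⟫ - ⟪w, ζ ω⟫| := abs_max_sub_max_le_abs _ _ _
      _ = |⟪v - w, ζ ω⟫| := by rw [inner_sub_left]
      _ ≤ dist v w * ‖ζ ω‖ := by rw [dist_eq_norm]; exact abs_real_inner_le_norm _ _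
  calc dist (expectedInnerPosPart μ ζ v) (expectedInnerPosPart μ ζ w)
      = ‖∫ ω, (max ⟪v, ζ ω⟫ 0 - max ⟪w, ζ ω⟫ 0) ∂μ‖ := by
        rw [dist_eq_norm, expectedInnerPosPart, expectedInnerPosPart,
          integral_sub (integrable_inner_posPart hζ v) (integrable_inner_posPart hζ w)]
    _ ≤ ∫ ω, dist v w * ‖ζ ω‖ ∂μ :=
        norm_integral_le_of_norm_le (hζ.norm.const_mul _) (ae_of_all _ hpoint)
    _ = dist v w * ∫ ω, ‖ζ ω‖ ∂μ := integral_const_mul _ _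
    _ ≤ (∫ ω, ‖ζ ω‖ ∂μ).toNNReal * dist v w := by
        rw [mul_comm]
        exact mul_le_mul_of_nonneg_right (Real.le_coe_toNNReal _) dist_nonneg

theorem expectedInnerPosPart_smul {c : ℝ} (hc : 0 ≤ c) (v : E) :
    expectedInnerPosPart μ ζ (c • v) = c * expectedInnerPosPart μ ζ v := by
  simp only [expectedInnerPosPart, real_inner_smul_left, ← integral_const_mul,
    mul_max_of_nonneg _ _ hc, mul_zero]

theorem expectedInnerPosPart_pos (hζ : Integrable ζ μ) {v : E}
    (hv : 0 < μ {ω | 0 < ⟪v, ζ ω⟫}) : 0 < expectedInnerPosPart μ ζ v := by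
  have hnonneg : 0 ≤ᵐ[μ] fun ω => max ⟪v, ζ ω⟫ 0 := ae_of_all _ fun _ => le_max_right _ _
  have hsupp : (Function.support fun ω => max ⟪v, ζ ω⟫ 0) = {ω | 0 < ⟪v, ζ ω⟫} := by
    ext ω
    simp only [Function.mem_support, Set.mem_ofPred_eq, ne_eq, max_eq_right_iff, not_le]
  rwa [expectedInnerPosPart,
    integral_pos_iff_support_of_nonneg_ae hnonneg (integrable_inner_posPart hζ v), hsupp]

theorem expectedInnerPosPart_le_integral_exp (hζ : Integrable ζ μ) {t : E}
    (hexp : Integrable (fun ω => exp ⟪t, ζ ω⟫) μ) :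
    expectedInnerPosPart μ ζ t ≤ ∫ ω, exp ⟪t, ζ ω⟫ ∂μ :=
  integral_mono (integrable_inner_posPart hζ t) hexp fun _ =>
    max_le ((le_add_of_nonneg_right zero_le_one).trans (add_one_le_exp _)) (exp_pos _).le

theorem integrable_exp_inner_of_norm_le [IsFiniteMeasure μ] (hζ : AEStronglyMeasurable ζ μ)
    {M : ℝ} (hbdd : ∀ᵐ ω ∂μ, ‖ζ ω‖ ≤ M) (t : E) : Integrable (fun ω => exp ⟪t, ζ ω⟫) μ := by
  refine Integrable.of_bound (continuous_exp.comp_aestronglyMeasurable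
    (aestronglyMeasurable_const.inner hζ)) (exp (‖t‖ * M)) ?_
  filter_upwards [hbdd] with ω hω
  rw [norm_of_nonneg (exp_pos _).le, exp_le_exp]
  exact (real_inner_le_norm _ _).trans (mul_le_mul_of_nonneg_left hω (norm_nonneg t))

end InnerPosPart

theorem stmt4_general
    {Ω : Type*} [MeasurableSpace Ω] (μ : Measure Ω) [IsProbabilityMeasure μ]
    (n : ℕ)
    (ζ : Ω → EuclideanSpace ℝ (Fin n)) (hmeas : Measurable ζ)
    (M : ℝ) (hbdd : ∀ ω, ‖ζ ω‖ ≤ M)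
    (hpos : ∀ v : EuclideanSpace ℝ (Fin n), v ≠ 0 → 0 < μ {ω | 0 < ⟪v, ζ ω⟫})
    (a : ℝ) :
    Bornology.IsBounded
      {t : EuclideanSpace ℝ (Fin n) | (∫ ω, Real.exp ⟪t, ζ ω⟫ ∂μ) ≤ a} := by
  have hbdd_ae : ∀ᵐ ω ∂μ, ‖ζ ω‖ ≤ M := ae_of_all _ hbdd
  have hζ : Integrable ζ μ := Integrable.of_bound hmeas.aestronglyMeasurable M hbdd_ae
  obtain ⟨c, hc, hcoer⟩ := exists_pos_mul_norm_le_of_continuous_of_posHomogeneous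
    (lipschitzWith_expectedInnerPosPart hζ).continuous
    (fun _ hc v => expectedInnerPosPart_smul hc v)
    (fun v hv => expectedInnerPosPart_pos hζ (hpos v hv))
  refine isBounded_iff_forall_norm_le.mpr ⟨a / c, fun t ht => ?_⟩
  rw [le_div_iff₀' hc]
  exact (hcoer t).trans <| (expectedInnerPosPart_le_integral_exp hζ
    (integrable_exp_inner_of_norm_le hζ.1 hbdd_ae t)).trans ht

/-- Let ζ be a bounded ℝ^n-valued random variable (n ≥ 1) such that
P{⟨v,ζ⟩ > 0} > 0 for every v ≠ 0. For every a > 1, the sublevel set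
V = {t : E[e^{⟨t,ζ⟩}] ≤ a} of the moment generating function is bounded. -/
theorem stmt4
    {Ω : Type*} [MeasurableSpace Ω] (μ : Measure Ω) [IsProbabilityMeasure μ]
    (n : ℕ) (hn : 1 ≤ n)
    (ζ : Ω → EuclideanSpace ℝ (Fin n)) (hmeas : Measurable ζ)
    (M : ℝ) (hbdd : ∀ ω, ‖ζ ω‖ ≤ M)
    (hpos : ∀ v : EuclideanSpace ℝ (Fin n), v ≠ 0 → 0 < μ {ω | 0 < ⟪v, ζ ω⟫})
    (a : ℝ) (ha : 1 < a) :
    Bornology.IsBounded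
      {t : EuclideanSpace ℝ (Fin n) | (∫ ω, Real.exp ⟪t, ζ ω⟫ ∂μ) ≤ a} :=
  stmt4_general μ n ζ hmeas M hbdd hpos a
end

section
/- The Legendre transform Λ*(z) = sup_{t ∈ ℝ^n}(⟨z,t⟩ − Λ(t)) is bounded on every bounded subset of ℝ^n and is continuous on ℝ^n. -/
open MeasureTheory Real
open scoped RealInnerProductSpace
open Metric Set

/-! Since `exp x ≥ 1 + x + (max x 0)² / 2` and, by compactness of the unit sphere,
`E[(max ⟪v, ζ⟫ 0)²] ≥ c > 0` uniformly in unit vectors `v`, the function `Λ` grows at least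
quadratically: `Λ t ≥ λ (c ‖t‖² / 2 - M ‖t‖)`. Hence every `t ↦ ⟪z, t⟫ - Λ t` is bounded
above, so `Λ*` is a real-valued supremum of affine functions: a finite convex function on a
finite-dimensional space, hence continuous, hence bounded on bounded sets. -/

lemma one_add_add_max_sq_div_two_le_exp (x : ℝ) : 1 + x + max x 0 ^ 2 / 2 ≤ exp x := by
  rcases le_total 0 x with hx | hx
  · simpa [max_eq_left hx] using quadratic_le_exp_of_nonneg hx
  · simpa [max_eq_right hx, add_comm] using add_one_le_exp x

lemma ConvexOn.ciSup {E ι : Type*} [AddCommMonoid E] [SMul ℝ E] [Nonempty ι] {s : Set E}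
    {f : ι → E → ℝ} (hf : ∀ i, ConvexOn ℝ s (f i))
    (hbdd : ∀ x ∈ s, BddAbove (range fun i => f i x)) :
    ConvexOn ℝ s fun x => ⨆ i, f i x := by
  refine ⟨(hf (Classical.arbitrary ι)).1, fun x hx y hy a b ha hb hab => ciSup_le fun i => ?_⟩
  dsimp only
  calc f i (a • x + b • y) ≤ a • f i x + b • f i y := (hf i).2 hx hy ha hb hab
    _ ≤ a • (⨆ i, f i x) + b • ⨆ i, f i y := by
      gcongr
      exacts [le_ciSup (hbdd x hx) i, le_ciSup (hbdd y hy) i]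

section ConvexConjugate

variable {E : Type*} [NormedAddCommGroup E] [InnerProductSpace ℝ E]

lemma convexOn_inner_sub_const (t : E) (c : ℝ) : ConvexOn ℝ univ fun z => ⟪z, t⟫ - c := by
  refine ⟨convex_univ, fun x _ y _ a b _ _ hab => le_of_eq ?_⟩
  simp only [inner_add_left, real_inner_smul_left, smul_eq_mul]
  linear_combination c * hab

lemma inner_sub_le_of_mul_sq_sub_le {f : E → ℝ} {b c : ℝ} (hc : 0 < c)
    (hf : ∀ t, c * ‖t‖ ^ 2 - b * ‖t‖ ≤ f t) (z t : E) :
    ⟪z, t⟫ - f t ≤ (‖z‖ + b) ^ 2 / (4 * c) := by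
  rw [le_div_iff₀ (by positivity)]
  nlinarith [real_inner_le_norm z t, hf t, sq_nonneg (2 * c * ‖t‖ - (‖z‖ + b)), norm_nonneg t]

end ConvexConjugate

section MomentGeneratingFunction

variable {Ω E : Type*} [NormedAddCommGroup E] [InnerProductSpace ℝ E] {ζ : Ω → E} {M : ℝ}

lemma abs_inner_le_norm_mul_of_norm_le (hbdd : ∀ ω, ‖ζ ω‖ ≤ M) (t : E) (ω : Ω) :
    |⟪t, ζ ω⟫| ≤ ‖t‖ * M :=
  (abs_real_inner_le_norm t (ζ ω)).trans (mul_le_mul_of_nonneg_left (hbdd ω) (norm_nonneg t))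

variable [MeasurableSpace Ω] {μ : Measure Ω} [MeasurableSpace E] [OpensMeasurableSpace E]

lemma integrable_comp_inner [IsFiniteMeasure μ] {g : ℝ → ℝ} (hg : Continuous g)
    (hζ : AEMeasurable ζ μ) (hbdd : ∀ ω, ‖ζ ω‖ ≤ M) (t : E) :
    Integrable (fun ω => g ⟪t, ζ ω⟫) μ := by
  obtain ⟨C, hC⟩ := (isCompact_Icc (a := -(‖t‖ * M)) (b := ‖t‖ * M)).exists_bound_of_continuousOn
    hg.continuousOn
  refine .of_bound ?_ C (ae_of_all _ fun ω => hC _ ?_)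
  · exact (hg.comp (continuous_const.inner continuous_id)).measurable.comp_aemeasurable hζ
      |>.aestronglyMeasurable
  · exact abs_le.mp (abs_inner_le_norm_mul_of_norm_le hbdd t ω)

lemma integral_max_inner_sq_pos [IsFiniteMeasure μ] (hζ : AEMeasurable ζ μ)
    (hbdd : ∀ ω, ‖ζ ω‖ ≤ M) {v : E} (hv : 0 < μ {ω | 0 < ⟪v, ζ ω⟫}) :
    0 < ∫ ω, max ⟪v, ζ ω⟫ 0 ^ 2 ∂μ := by
  rw [integral_pos_iff_support_of_nonneg (fun ω => sq_nonneg _)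
    (integrable_comp_inner (g := fun x => max x 0 ^ 2) (by fun_prop) hζ hbdd v)]
  convert hv using 2
  ext ω
  simp [Function.mem_support]

lemma exists_pos_forall_mul_sq_le_integral_max_inner_sq [IsFiniteMeasure μ]
    [FiniteDimensional ℝ E] (hζ : AEMeasurable ζ μ) (hbdd : ∀ ω, ‖ζ ω‖ ≤ M)
    (hpos : ∀ v : E, v ≠ 0 → 0 < μ {ω | 0 < ⟪v, ζ ω⟫}) :
    ∃ c > 0, ∀ t : E, c * ‖t‖ ^ 2 ≤ ∫ ω, max ⟪t, ζ ω⟫ 0 ^ 2 ∂μ := by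
  set q : E → ℝ := fun v => ∫ ω, max ⟪v, ζ ω⟫ 0 ^ 2 ∂μ
  have hq : ContinuousOn q (sphere 0 1) := by
    refine continuousOn_of_dominated (bound := fun _ => M ^ 2)
      (fun v _ => (integrable_comp_inner (g := fun x => max x 0 ^ 2) (by fun_prop) hζ hbdd v).1)
      (fun v hv => ae_of_all _ fun ω => ?_) (integrable_const _)
      (ae_of_all _ fun ω => by fun_prop)
    have := abs_inner_le_norm_mul_of_norm_le hbdd v ω
    rw [mem_sphere_zero_iff_norm.mp hv, one_mul] at this
    have hmax : |max ⟪v, ζ ω⟫ 0| ≤ M := abs_le.mpr ⟨(neg_le_of_abs_le this).trans (le_max_left _ _),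
      max_le (le_of_abs_le this) ((abs_nonneg _).trans this)⟩
    rw [norm_pow, Real.norm_eq_abs]
    exact pow_le_pow_left₀ (abs_nonneg _) hmax 2
  obtain ⟨c, hc, hcq⟩ : ∃ c > 0, ∀ v ∈ sphere (0 : E) 1, c ≤ q v := by
    rcases (sphere (0 : E) 1).eq_empty_or_nonempty with h | h
    · exact ⟨1, one_pos, by simp [h]⟩
    obtain ⟨v₀, hv₀, hmin⟩ := (isCompact_sphere 0 1).exists_isMinOn h hq
    have hv₀0 : v₀ ≠ 0 := ne_zero_of_mem_sphere one_ne_zero ⟨v₀, hv₀⟩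
    exact ⟨q v₀, integral_max_inner_sq_pos hζ hbdd (hpos v₀ hv₀0), hmin⟩
  refine ⟨c, hc, fun t => ?_⟩
  rcases eq_or_ne t 0 with rfl | ht
  · simp
  have ht' : 0 < ‖t‖ := norm_pos_iff.mpr ht
  have hv : ‖t‖⁻¹ • t ∈ sphere (0 : E) 1 := by
    rw [mem_sphere_zero_iff_norm, norm_smul, norm_inv, norm_norm, inv_mul_cancel₀ ht'.ne']
  have hscale : ∀ ω, max ⟪t, ζ ω⟫ 0 ^ 2 = ‖t‖ ^ 2 * max ⟪‖t‖⁻¹ • t, ζ ω⟫ 0 ^ 2 := fun ω => by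
    rw [real_inner_smul_left, ← mul_pow, mul_max_of_nonneg _ _ ht'.le,
      mul_inv_cancel_left₀ ht'.ne', mul_zero]
  calc c * ‖t‖ ^ 2 ≤ ‖t‖ ^ 2 * q (‖t‖⁻¹ • t) := by
        rw [mul_comm]; exact mul_le_mul_of_nonneg_left (hcq _ hv) (by positivity)
    _ = ∫ ω, max ⟪t, ζ ω⟫ 0 ^ 2 ∂μ := by simp only [q, hscale, integral_const_mul]

lemma exists_pos_forall_le_integral_exp_inner [IsProbabilityMeasure μ]
    [FiniteDimensional ℝ E] (hζ : AEMeasurable ζ μ) (hbdd : ∀ ω, ‖ζ ω‖ ≤ M)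
    (hpos : ∀ v : E, v ≠ 0 → 0 < μ {ω | 0 < ⟪v, ζ ω⟫}) :
    ∃ c > 0, ∀ t : E, 1 - M * ‖t‖ + c * ‖t‖ ^ 2 ≤ ∫ ω, exp ⟪t, ζ ω⟫ ∂μ := by
  obtain ⟨c, hc, hcq⟩ := exists_pos_forall_mul_sq_le_integral_max_inner_sq hζ hbdd hpos
  refine ⟨c / 2, by positivity, fun t => ?_⟩
  have hsq := integrable_comp_inner (g := fun x => max x 0 ^ 2 / 2) (by fun_prop) hζ hbdd t
  calc 1 - M * ‖t‖ + c / 2 * ‖t‖ ^ 2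
      ≤ ∫ ω, (1 - M * ‖t‖ + max ⟪t, ζ ω⟫ 0 ^ 2 / 2) ∂μ := by
        rw [integral_add (integrable_const _) hsq, integral_div, integral_const, probReal_univ,
          one_smul]
        linarith [hcq t]
    _ ≤ ∫ ω, exp ⟪t, ζ ω⟫ ∂μ := by
      refine integral_mono ((integrable_const _).add hsq)
        (integrable_comp_inner continuous_exp hζ hbdd t) fun ω => ?_
      have := neg_le_of_abs_le (abs_inner_le_norm_mul_of_norm_le hbdd t ω)
      linarith [one_add_add_max_sq_div_two_le_exp ⟪t, ζ ω⟫]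

end MomentGeneratingFunction

theorem stmt6_general
    {Ω : Type*} [MeasurableSpace Ω] (μ : Measure Ω) [IsProbabilityMeasure μ]
    (n : ℕ)
    (ζ : Ω → EuclideanSpace ℝ (Fin n)) (hmeas : Measurable ζ)
    (M : ℝ) (hbdd : ∀ ω, ‖ζ ω‖ ≤ M)
    (hpos : ∀ v : EuclideanSpace ℝ (Fin n), v ≠ 0 → 0 < μ {ω | 0 < ⟪v, ζ ω⟫})
    (lam : ℝ) (hlam : 0 < lam)
    (Λ : EuclideanSpace ℝ (Fin n) → ℝ)
    (hΛ : ∀ t, Λ t = lam * ((∫ ω, Real.exp ⟪t, ζ ω⟫ ∂μ) - 1))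
    (Λstar : EuclideanSpace ℝ (Fin n) → ℝ)
    (hΛstar : ∀ z, Λstar z = ⨆ t : EuclideanSpace ℝ (Fin n), (⟪z, t⟫ - Λ t)) :
    (∀ z : EuclideanSpace ℝ (Fin n),
        BddAbove (Set.range fun t : EuclideanSpace ℝ (Fin n) => ⟪z, t⟫ - Λ t)) ∧
    (∀ s : Set (EuclideanSpace ℝ (Fin n)), Bornology.IsBounded s →
        ∃ C : ℝ, ∀ z ∈ s, |Λstar z| ≤ C) ∧
    Continuous Λstar := by
  obtain ⟨c, hc, hmgf⟩ := exists_pos_forall_le_integral_exp_inner hmeas.aemeasurable hbdd hpos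
  have hΛ_ge : ∀ t, lam * c * ‖t‖ ^ 2 - lam * M * ‖t‖ ≤ Λ t := fun t => by
    rw [hΛ]
    nlinarith [hmgf t]
  have hbddAbove : ∀ z, BddAbove (range fun t => ⟪z, t⟫ - Λ t) := fun z =>
    ⟨_, forall_mem_range.mpr (inner_sub_le_of_mul_sq_sub_le (by positivity) hΛ_ge z)⟩
  have hcont : Continuous Λstar := by
    rw [funext hΛstar, ← continuousOn_univ]
    exact (ConvexOn.ciSup (fun t => convexOn_inner_sub_const t (Λ t))
      fun z _ => hbddAbove z).continuousOn isOpen_univ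
  refine ⟨hbddAbove, fun s hs => ?_, hcont⟩
  obtain ⟨C, hC⟩ := hs.isCompact_closure.exists_bound_of_continuousOn hcont.continuousOn
  exact ⟨C, fun z hz => hC z (subset_closure hz)⟩

/-- Let ζ be a bounded ℝ^n-valued random variable (n ≥ 1) with
P{⟨v,ζ⟩ > 0} > 0 for every v ≠ 0, λ > 0, Λ(t) = λ(E[e^{⟨t,ζ⟩}] − 1) and
Λ*(z) = sup_t (⟨z,t⟩ − Λ(t)).  Then Λ* is (well defined and) bounded on every
bounded subset of ℝ^n and continuous on ℝ^n. -/
theorem stmt6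
    {Ω : Type*} [MeasurableSpace Ω] (μ : Measure Ω) [IsProbabilityMeasure μ]
    (n : ℕ) (hn : 1 ≤ n)
    (ζ : Ω → EuclideanSpace ℝ (Fin n)) (hmeas : Measurable ζ)
    (M : ℝ) (hbdd : ∀ ω, ‖ζ ω‖ ≤ M)
    (hpos : ∀ v : EuclideanSpace ℝ (Fin n), v ≠ 0 → 0 < μ {ω | 0 < ⟪v, ζ ω⟫})
    (lam : ℝ) (hlam : 0 < lam)
    (Λ : EuclideanSpace ℝ (Fin n) → ℝ)
    (hΛ : ∀ t, Λ t = lam * ((∫ ω, Real.exp ⟪t, ζ ω⟫ ∂μ) - 1))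
    (Λstar : EuclideanSpace ℝ (Fin n) → ℝ)
    (hΛstar : ∀ z, Λstar z = ⨆ t : EuclideanSpace ℝ (Fin n), (⟪z, t⟫ - Λ t)) :
    (∀ z : EuclideanSpace ℝ (Fin n),
        BddAbove (Set.range fun t : EuclideanSpace ℝ (Fin n) => ⟪z, t⟫ - Λ t)) ∧
    (∀ s : Set (EuclideanSpace ℝ (Fin n)), Bornology.IsBounded s →
        ∃ C : ℝ, ∀ z ∈ s, |Λstar z| ≤ C) ∧
    Continuous Λstar :=
  stmt6_general μ n ζ hmeas M hbdd hpos lam hlam Λ hΛ Λstar hΛstar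
end

section
/- There exists η > 0 such that P{⟨v,ζ⟩ > η} > η for every v ∈ ℝ^n with |v| = 1. -/
/-!
For a direction `v` with `P{⟨v,ζ⟩ > 0} > 0`, continuity of measure from below gives `ε > 0` with
`P{⟨v,ζ⟩ > ε} > ε`. As `‖ζ‖ ≤ M`, replacing `v` by `w` moves `⟨·,ζ⟩` by at most `‖w - v‖ M`, so
`P{⟨w,ζ⟩ > η} > η` holds for all `(η, w)` near `(0, v)`. Compactness of the unit sphere makes the
neighbourhood of `0` in `η` uniform in `v`.
-/

open MeasureTheory Filter Topology
open scoped RealInnerProductSpace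

section

variable {Ω E : Type*} [NormedAddCommGroup E] [InnerProductSpace ℝ E] {ζ : Ω → E} {M : ℝ}

lemma setOf_lt_inner_subset (hbdd : ∀ ω, ‖ζ ω‖ ≤ M) {v w : E} {a b : ℝ}
    (hab : b + ‖w - v‖ * M ≤ a) : {ω | a < ⟪v, ζ ω⟫} ⊆ {ω | b < ⟪w, ζ ω⟫} := by
  intro ω (hω : a < ⟪v, ζ ω⟫)
  show b < ⟪w, ζ ω⟫
  have hsplit : ⟪w, ζ ω⟫ = ⟪v, ζ ω⟫ + ⟪w - v, ζ ω⟫ := by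
    rw [← inner_add_left, add_sub_cancel]
  have hdev : -(‖w - v‖ * M) ≤ ⟪w - v, ζ ω⟫ :=
    calc -(‖w - v‖ * M) ≤ -(‖w - v‖ * ‖ζ ω‖) := by gcongr; exact hbdd ω
      _ ≤ ⟪w - v, ζ ω⟫ := neg_le_of_abs_le (abs_real_inner_le_norm _ _)
  linarith

variable [MeasurableSpace Ω] {μ : Measure Ω}

lemma exists_pos_measure_setOf_lt {f : Ω → ℝ} (h : 0 < μ {ω | 0 < f ω}) :
    ∃ ε > (0 : ℝ), 0 < μ {ω | ε < f ω} := by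
  by_contra! hnull
  have hcover : {ω | 0 < f ω} ⊆ ⋃ k : ℕ, {ω | 1 / ((k : ℝ) + 1) < f ω} :=
    fun ω (hω : 0 < f ω) ↦ Set.mem_iUnion.2 (exists_nat_one_div_lt hω)
  have hzero : μ {ω | 0 < f ω} = 0 :=
    measure_mono_null hcover <| measure_iUnion_null fun k ↦
      nonpos_iff_eq_zero.1 (hnull _ Nat.one_div_pos_of_nat)
  exact h.ne' hzero

lemma exists_pos_ofReal_lt_measure_setOf_lt {f : Ω → ℝ} (h : 0 < μ {ω | 0 < f ω}) :
    ∃ ε > (0 : ℝ), ENNReal.ofReal ε < μ {ω | ε < f ω} := by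
  obtain ⟨ε, hε, hμε⟩ := exists_pos_measure_setOf_lt h
  obtain ⟨δ, -, hδ, hδμ⟩ := ENNReal.lt_iff_exists_real_btwn.1 hμε
  refine ⟨min ε δ, lt_min hε (ENNReal.ofReal_pos.1 hδ), ?_⟩
  calc ENNReal.ofReal (min ε δ) ≤ ENNReal.ofReal δ := ENNReal.ofReal_le_ofReal (min_le_right _ _)
    _ < μ {ω | ε < f ω} := hδμ
    _ ≤ μ {ω | min ε δ < f ω} := measure_mono fun ω (hω : ε < f ω) ↦ (min_le_left _ _).trans_lt hω

lemma eventually_ofReal_lt_measure_setOf_lt_inner (hbdd : ∀ ω, ‖ζ ω‖ ≤ M) {v : E}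
    (hv : 0 < μ {ω | 0 < ⟪v, ζ ω⟫}) :
    ∀ᶠ p : ℝ × E in 𝓝 (0, v), ENNReal.ofReal p.1 < μ {ω | p.1 < ⟪p.2, ζ ω⟫} := by
  obtain ⟨ε, hε, hμε⟩ := exists_pos_ofReal_lt_measure_setOf_lt hv
  have hsmall : ∀ᶠ p : ℝ × E in 𝓝 (0, v), p.1 < ε :=
    continuous_fst.continuousAt.eventually_lt continuousAt_const hε
  have hclose : ∀ᶠ p : ℝ × E in 𝓝 (0, v), p.1 + ‖p.2 - v‖ * M < ε := by
    have hcont : Continuous fun p : ℝ × E ↦ p.1 + ‖p.2 - v‖ * M := by fun_prop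
    exact hcont.continuousAt.eventually_lt continuousAt_const (by simpa using hε)
  filter_upwards [hsmall, hclose] with p hp₁ hp
  calc ENNReal.ofReal p.1 ≤ ENNReal.ofReal ε := ENNReal.ofReal_le_ofReal hp₁.le
    _ < μ {ω | ε < ⟪v, ζ ω⟫} := hμε
    _ ≤ μ {ω | p.1 < ⟪p.2, ζ ω⟫} := measure_mono (setOf_lt_inner_subset hbdd hp.le)

theorem IsCompact.exists_pos_forall_ofReal_lt_measure_setOf_lt_inner {K : Set E}
    (hK : IsCompact K) (hbdd : ∀ ω, ‖ζ ω‖ ≤ M)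
    (hpos : ∀ v ∈ K, 0 < μ {ω | 0 < ⟪v, ζ ω⟫}) :
    ∃ η > (0 : ℝ), ∀ v ∈ K, ENNReal.ofReal η < μ {ω | η < ⟪v, ζ ω⟫} := by
  have huniform : ∀ᶠ η in 𝓝 (0 : ℝ), ∀ v ∈ K, ENNReal.ofReal η < μ {ω | η < ⟪v, ζ ω⟫} :=
    hK.eventually_forall_of_forall_eventually fun v hv ↦
      eventually_ofReal_lt_measure_setOf_lt_inner hbdd (hpos v hv)
  obtain ⟨η, hηK, hη⟩ :=
    ((huniform.filter_mono nhdsWithin_le_nhds).and self_mem_nhdsWithin).exists (f := 𝓝[>] 0)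
  exact ⟨η, hη, hηK⟩

end

theorem stmt7_general
    {Ω : Type*} [MeasurableSpace Ω] (μ : Measure Ω)
    (n : ℕ)
    (ζ : Ω → EuclideanSpace ℝ (Fin n))
    (M : ℝ) (hbdd : ∀ ω, ‖ζ ω‖ ≤ M)
    (hpos : ∀ v : EuclideanSpace ℝ (Fin n), v ≠ 0 → 0 < μ {ω | 0 < ⟪v, ζ ω⟫}) :
    ∃ η > (0 : ℝ), ∀ v : EuclideanSpace ℝ (Fin n), ‖v‖ = 1 →
      ENNReal.ofReal η < μ {ω | η < ⟪v, ζ ω⟫} := by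
  obtain ⟨η, hη, hsphere⟩ := (isCompact_sphere (0 : EuclideanSpace ℝ (Fin n)) 1)
    |>.exists_pos_forall_ofReal_lt_measure_setOf_lt_inner hbdd fun v hv ↦
      hpos v (ne_zero_of_mem_unit_sphere ⟨v, hv⟩)
  exact ⟨η, hη, fun v hv ↦ hsphere v (by simpa using hv)⟩

/-- Let ζ be a bounded ℝ^n-valued random variable (n ≥ 1) such that
P{⟨v,ζ⟩ > 0} > 0 for every v ≠ 0. Then there exists η > 0 such that
P{⟨v,ζ⟩ > η} > η for every unit vector v. -/
theorem stmt7
    {Ω : Type*} [MeasurableSpace Ω] (μ : Measure Ω) [IsProbabilityMeasure μ]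
    (n : ℕ) (hn : 1 ≤ n)
    (ζ : Ω → EuclideanSpace ℝ (Fin n)) (hmeas : Measurable ζ)
    (M : ℝ) (hbdd : ∀ ω, ‖ζ ω‖ ≤ M)
    (hpos : ∀ v : EuclideanSpace ℝ (Fin n), v ≠ 0 → 0 < μ {ω | 0 < ⟪v, ζ ω⟫}) :
    ∃ η > (0 : ℝ), ∀ v : EuclideanSpace ℝ (Fin n), ‖v‖ = 1 →
      ENNReal.ofReal η < μ {ω | η < ⟪v, ζ ω⟫} :=
  stmt7_general μ n ζ M hbdd hpos
end

section
/- Let θ ∈ ℝ^n satisfy ⟨𝟙,θ⟩ > λE[⟨𝟙,ζ⟩], where 𝟙 = (1,…,1), and suppose P{⟨𝟙,ζ⟩ > 0} > 0. Then for every z ∈ ℝ^n with z ≥ θ, one has Λ*(z) ≥ sup_{t ≥ 0} { t⟨𝟙,θ⟩ − λ(E[e^{t⟨𝟙,ζ⟩}] − 1) } > 0; in particular inf_{z ≥ θ} Λ*(z) > 0. -/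
open MeasureTheory Real ProbabilityTheory Filter Topology
open scoped RealInnerProductSpace

/-! Along the direction `t • 𝟙` the function `Λ` becomes `λ (mgf ⟨𝟙, ζ⟩ t - 1)` and
`⟪z, t • 𝟙⟫ ≥ t ⟪𝟙, θ⟫` for `z ≥ θ`, so `Λ* z` dominates every element of `S`.
The set `S` is bounded above because, by the Chernoff bound, the mgf grows at least like
`p e^{ct}` once `⟨𝟙, ζ⟩ ≥ c > 0` with probability `p > 0`; and `sSup S > 0` because
`t ↦ t ⟪𝟙, θ⟫ - λ (mgf t - 1)` vanishes at `0` with derivative `⟪𝟙, θ⟫ - λ E⟨𝟙, ζ⟩ > 0`. -/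

theorem HasDerivAt.exists_gt_of_deriv_pos {f : ℝ → ℝ} {f' x : ℝ} (hf : HasDerivAt f f' x)
    (hf' : 0 < f') : ∃ y > x, f x < f y := by
  have hslope : ∀ᶠ t in 𝓝[>] 0, 0 < t⁻¹ • (f (x + t) - f x) :=
    hf.tendsto_slope_zero_right.eventually (lt_mem_nhds hf')
  obtain ⟨t, hpos, ht⟩ := (hslope.and self_mem_nhdsWithin).exists
  refine ⟨x + t, lt_add_of_pos_right x ht, ?_⟩
  exact sub_pos.1 (pos_of_mul_pos_right hpos (inv_pos.2 ht).le)

theorem mul_sub_mul_exp_le (a : ℝ) {b c t : ℝ} (hb : 0 < b) (hc : 0 < c) (ht : 0 ≤ t) :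
    a * t - b * exp (c * t) ≤ a ^ 2 / (2 * b * c ^ 2) := by
  have hexp : (c * t) ^ 2 / 2 ≤ exp (c * t) := by
    nlinarith [quadratic_le_exp_of_nonneg (mul_nonneg hc.le ht), mul_nonneg hc.le ht]
  rw [le_div_iff₀ (by positivity)]
  nlinarith [sq_nonneg (a - b * c ^ 2 * t),
    mul_le_mul_of_nonneg_left hexp (by positivity : (0 : ℝ) ≤ 2 * b ^ 2 * c ^ 2)]

theorem inner_le_inner_of_forall_le {ι : Type*} [Fintype ι] {v x y : EuclideanSpace ℝ ι}
    (hv : ∀ j, 0 ≤ v j) (h : ∀ j, x j ≤ y j) : ⟪v, x⟫ ≤ ⟪v, y⟫ := by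
  simp only [PiLp.inner_apply, RCLike.inner_apply, conj_trivial]
  exact Finset.sum_le_sum fun j _ => mul_le_mul_of_nonneg_right (h j) (hv j)

theorem EReal.coe_csSup_le {S : Set ℝ} {L : EReal} (hne : S.Nonempty) (hS : BddAbove S)
    (h : ∀ x ∈ S, (x : EReal) ≤ L) : ((sSup S : ℝ) : EReal) ≤ L := by
  rw [Monotone.map_csSup_of_continuousAt continuous_coe_real_ereal.continuousAt
    (fun _ _ => EReal.coe_le_coe) hne hS]
  exact sSup_le (Set.forall_mem_image.2 h)

section
variable {Ω : Type*} [MeasurableSpace Ω] {μ : Measure Ω} [IsProbabilityMeasure μ] {X : Ω → ℝ}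

theorem exists_pos_measureReal_le_of_measure_pos (hX : 0 < μ {ω | 0 < X ω}) :
    ∃ c > 0, 0 < μ.real {ω | c ≤ X ω} := by
  have hcover : {ω | 0 < X ω} ⊆ ⋃ k : ℕ, {ω | 1 / (k + 1 : ℝ) ≤ X ω} := fun ω hω =>
    Set.mem_iUnion.2 ((exists_nat_one_div_lt (show 0 < X ω from hω)).imp fun _ h => h.le)
  obtain ⟨k, hk⟩ := exists_measure_pos_of_not_measure_iUnion_null
    (fun h => hX.ne' (measure_mono_null hcover h))
  exact ⟨_, Nat.one_div_pos_of_nat, ENNReal.toReal_pos hk.ne' (measure_ne_top _ _)⟩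

theorem integrableExpSet_eq_univ_of_mem_Icc {a b : ℝ} (hX : AEMeasurable X μ)
    (hb : ∀ᵐ ω ∂μ, X ω ∈ Set.Icc a b) : integrableExpSet X μ = Set.univ :=
  Set.eq_univ_of_forall fun _ => integrable_exp_mul_of_mem_Icc hX hb

theorem exists_pos_mul_sub_mgf_pos {a lam : ℝ} (hX : 0 ∈ interior (integrableExpSet X μ))
    (ha : lam * μ[X] < a) : ∃ t > 0, 0 < t * a - lam * (mgf X μ t - 1) := by
  have hderiv : HasDerivAt (fun t => t * a - lam * (mgf X μ t - 1)) (a - lam * μ[X]) 0 := by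
    have h := (hasDerivAt_mul_const a).sub (((hasDerivAt_mgf hX).sub_const 1).const_mul lam)
    simp only [zero_mul, exp_zero, mul_one] at h
    exact h
  simpa [mgf_zero] using hderiv.exists_gt_of_deriv_pos (sub_pos.2 ha)

theorem exists_forall_nonneg_mul_sub_mgf_le {a lam : ℝ} (hlam : 0 < lam)
    (hint : ∀ t, Integrable (fun ω => exp (t * X ω)) μ) (hX : 0 < μ {ω | 0 < X ω}) :
    ∃ B, ∀ t ≥ 0, t * a - lam * (mgf X μ t - 1) ≤ B := by
  obtain ⟨c, hc, hp⟩ := exists_pos_measureReal_le_of_measure_pos hX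
  refine ⟨a ^ 2 / (2 * (lam * μ.real {ω | c ≤ X ω}) * c ^ 2) + lam, fun t ht => ?_⟩
  have hchernoff : μ.real {ω | c ≤ X ω} * exp (c * t) ≤ mgf X μ t := by
    have h := mul_le_mul_of_nonneg_right (measure_ge_le_exp_mul_mgf c ht (hint t))
      (exp_pos (c * t)).le
    rwa [mul_right_comm, ← exp_add, neg_mul, mul_comm t, neg_add_cancel, exp_zero, one_mul] at h
  have := mul_sub_mul_exp_le a (mul_pos hlam hp) hc ht
  nlinarith [mul_le_mul_of_nonneg_left hchernoff hlam.le]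
end

theorem stmt9_general
    {Ω : Type*} [MeasurableSpace Ω] (μ : Measure Ω) [IsProbabilityMeasure μ]
    (n : ℕ)
    (ζ : Ω → EuclideanSpace ℝ (Fin n)) (hmeas : Measurable ζ)
    (M : ℝ) (hbdd : ∀ ω, ‖ζ ω‖ ≤ M)
    (lam : ℝ) (hlam : 0 < lam)
    (Λ : EuclideanSpace ℝ (Fin n) → ℝ)
    (hΛ : ∀ t, Λ t = lam * ((∫ ω, Real.exp ⟪t, ζ ω⟫ ∂μ) - 1))
    (Λstar : EuclideanSpace ℝ (Fin n) → EReal)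
    (hΛstar : ∀ z, Λstar z
      = ⨆ t : EuclideanSpace ℝ (Fin n), ((⟪z, t⟫ - Λ t : ℝ) : EReal))
    (ones : EuclideanSpace ℝ (Fin n)) (hones : ∀ j, ones j = 1)
    (θ : EuclideanSpace ℝ (Fin n))
    (hθ : lam * (∫ ω, ⟪ones, ζ ω⟫ ∂μ) < ⟪ones, θ⟫)
    (hpos : 0 < μ {ω | 0 < ⟪ones, ζ ω⟫})
    (S : Set ℝ)
    (hS : S = {x : ℝ | ∃ t : ℝ, 0 ≤ t ∧
        x = t * ⟪ones, θ⟫ - lam * ((∫ ω, Real.exp (t * ⟪ones, ζ ω⟫) ∂μ) - 1)}) :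
    (0 < sSup S) ∧
    (∀ z : EuclideanSpace ℝ (Fin n), (∀ j, θ j ≤ z j) → ((sSup S : ℝ) : EReal) ≤ Λstar z) ∧
    (0 < ⨅ z : {z : EuclideanSpace ℝ (Fin n) // ∀ j, θ j ≤ z j}, Λstar z) := by
  set X : Ω → ℝ := fun ω => ⟪ones, ζ ω⟫
  have hXmeas : AEMeasurable X μ :=
    ((continuous_const.inner continuous_id).measurable.comp hmeas).aemeasurable
  have hXbdd : ∀ᵐ ω ∂μ, X ω ∈ Set.Icc (-(‖ones‖ * M)) (‖ones‖ * M) :=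
    ae_of_all _ fun ω => abs_le.1 <| (abs_real_inner_le_norm _ _).trans <|
      mul_le_mul_of_nonneg_left (hbdd ω) (norm_nonneg _)
  obtain ⟨B, hB⟩ := exists_forall_nonneg_mul_sub_mgf_le (a := ⟪ones, θ⟫) hlam
    (fun t => integrable_exp_mul_of_mem_Icc hXmeas hXbdd) hpos
  obtain ⟨t₀, ht₀, hpos₀⟩ := exists_pos_mul_sub_mgf_pos (X := X)
    (by simp [integrableExpSet_eq_univ_of_mem_Icc hXmeas hXbdd]) hθ
  have hSbdd : BddAbove S := ⟨B, by rw [hS]; rintro _ ⟨t, ht, rfl⟩; exact hB t ht⟩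
  have hmem₀ : t₀ * ⟪ones, θ⟫ - lam * (mgf X μ t₀ - 1) ∈ S := hS ▸ ⟨t₀, ht₀.le, rfl⟩
  have hS₀ : 0 < sSup S := lt_csSup_of_lt hSbdd hmem₀ hpos₀
  have hS_le : ∀ z : EuclideanSpace ℝ (Fin n), (∀ j, θ j ≤ z j) →
      ((sSup S : ℝ) : EReal) ≤ Λstar z := by
    intro z hz
    have hθz : ⟪ones, θ⟫ ≤ ⟪ones, z⟫ := inner_le_inner_of_forall_le (by simp [hones]) hz
    refine EReal.coe_csSup_le ⟨_, hmem₀⟩ hSbdd ?_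
    rw [hS]
    rintro _ ⟨t, ht, rfl⟩
    rw [hΛstar]
    refine le_trans ?_ (le_iSup _ (t • ones))
    rw [EReal.coe_le_coe_iff, hΛ]
    simp only [real_inner_smul_left, real_inner_smul_right, real_inner_comm ones z]
    gcongr
  exact ⟨hS₀, hS_le, (EReal.coe_pos.2 hS₀).trans_le (le_iInf fun z => hS_le z.1 z.2)⟩

/-- Let ζ be a bounded ℝ^n-valued random variable, λ > 0,
Λ(t) = λ(E[e^{⟨t,ζ⟩}] − 1), Λ*(z) = sup_t (⟨z,t⟩ − Λ(t)). Let θ satisfy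
⟨𝟙,θ⟩ > λE[⟨𝟙,ζ⟩] and P{⟨𝟙,ζ⟩ > 0} > 0. Then for every z ≥ θ (componentwise),
Λ*(z) ≥ sup_{t ≥ 0} { t⟨𝟙,θ⟩ − λ(E[e^{t⟨𝟙,ζ⟩}] − 1) } > 0; in particular
inf_{z ≥ θ} Λ*(z) > 0. -/
theorem stmt9
    {Ω : Type*} [MeasurableSpace Ω] (μ : Measure Ω) [IsProbabilityMeasure μ]
    (n : ℕ) (hn : 1 ≤ n)
    (ζ : Ω → EuclideanSpace ℝ (Fin n)) (hmeas : Measurable ζ)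
    (M : ℝ) (hbdd : ∀ ω, ‖ζ ω‖ ≤ M)
    (lam : ℝ) (hlam : 0 < lam)
    (Λ : EuclideanSpace ℝ (Fin n) → ℝ)
    (hΛ : ∀ t, Λ t = lam * ((∫ ω, Real.exp ⟪t, ζ ω⟫ ∂μ) - 1))
    (Λstar : EuclideanSpace ℝ (Fin n) → EReal)
    (hΛstar : ∀ z, Λstar z
      = ⨆ t : EuclideanSpace ℝ (Fin n), ((⟪z, t⟫ - Λ t : ℝ) : EReal))
    (ones : EuclideanSpace ℝ (Fin n)) (hones : ∀ j, ones j = 1)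
    (θ : EuclideanSpace ℝ (Fin n))
    (hθ : lam * (∫ ω, ⟪ones, ζ ω⟫ ∂μ) < ⟪ones, θ⟫)
    (hpos : 0 < μ {ω | 0 < ⟪ones, ζ ω⟫})
    (S : Set ℝ)
    (hS : S = {x : ℝ | ∃ t : ℝ, 0 ≤ t ∧
        x = t * ⟪ones, θ⟫ - lam * ((∫ ω, Real.exp (t * ⟪ones, ζ ω⟫) ∂μ) - 1)}) :
    (0 < sSup S) ∧
    (∀ z : EuclideanSpace ℝ (Fin n), (∀ j, θ j ≤ z j) → ((sSup S : ℝ) : EReal) ≤ Λstar z) ∧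
    (0 < ⨅ z : {z : EuclideanSpace ℝ (Fin n) // ∀ j, θ j ≤ z j}, Λstar z) :=
  stmt9_general μ n ζ hmeas M hbdd lam hlam Λ hΛ Λstar hΛstar ones hones θ hθ hpos S hS
end

section
/- If θ > (λ/l)∫_0^l g(y) dy and the Lebesgue measure of {y ∈ [0,l] : g(y) > 0} is positive, then the function t ↦ θt − Λ_{g,l}(t) attains its supremum over ℝ at a unique point t*, this t* lies in (0, ∞), and it satisfies θ = Λ'_{g,l}(t*) = (λ/l)∫_0^l g(y) e^{t* g(y)} dy. -/
/-!
Write `Λ'(t) = (λ/l) ∫ g e^{t g}` for the derivative of `Λ`. It is strictly increasing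
because `g > 0` on a set of positive measure, it equals `(λ/l) ∫ g < θ` at `t = 0`, and it
grows at least linearly because `g e^{t g} ≥ g + t (g⁺)²` for `t ≥ 0`. By Darboux's theorem
`Λ'(t*) = θ` for some `t* > 0`, and by the mean value theorem the strict monotonicity of `Λ'`
makes `t*` the strict maximiser of `t ↦ θ t - Λ t`.
-/

open MeasureTheory Real ProbabilityTheory Filter Set

lemma mul_sub_lt_of_strictMono_deriv {Λ Λ' : ℝ → ℝ} (hΛ : ∀ t, HasDerivAt Λ (Λ' t) t)
    (hmono : StrictMono Λ') {θ t₀ t : ℝ} (hθ : Λ' t₀ = θ) (ht : t ≠ t₀) :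
    θ * t - Λ t < θ * t₀ - Λ t₀ := by
  have hcont : Continuous Λ := continuous_iff_continuousAt.2 fun x => (hΛ x).continuousAt
  rcases ht.lt_or_gt with ht | ht
  · obtain ⟨c, hc, hslope⟩ :=
      exists_hasDerivAt_eq_slope Λ Λ' ht hcont.continuousOn fun x _ => hΛ x
    have hlt : (Λ t₀ - Λ t) / (t₀ - t) < θ := hslope ▸ hθ ▸ hmono hc.2
    rw [div_lt_iff₀ (sub_pos.2 ht)] at hlt
    linarith
  · obtain ⟨c, hc, hslope⟩ :=
      exists_hasDerivAt_eq_slope Λ Λ' ht hcont.continuousOn fun x _ => hΛ x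
    have hlt : θ < (Λ t - Λ t₀) / (t - t₀) := hslope ▸ hθ ▸ hmono hc.1
    rw [lt_div_iff₀ (sub_pos.2 ht)] at hlt
    linarith

lemma mul_exp_mul_le_mul_exp_mul {b s t : ℝ} (hst : s ≤ t) :
    b * exp (s * b) ≤ b * exp (t * b) := by
  rcases le_total 0 b with hb | hb
  · exact mul_le_mul_of_nonneg_left (exp_le_exp.2 (mul_le_mul_of_nonneg_right hst hb)) hb
  · exact mul_le_mul_of_nonpos_left (exp_le_exp.2 (mul_le_mul_of_nonpos_right hst hb)) hb

lemma mul_exp_mul_lt_mul_exp_mul {b s t : ℝ} (hb : 0 < b) (hst : s < t) :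
    b * exp (s * b) < b * exp (t * b) :=
  mul_lt_mul_of_pos_left (exp_lt_exp.2 (mul_lt_mul_of_pos_right hst hb)) hb

lemma add_mul_sq_max_le_mul_exp_mul {b t : ℝ} (ht : 0 ≤ t) :
    b + t * max b 0 ^ 2 ≤ b * exp (t * b) := by
  rcases le_total 0 b with hb | hb
  · rw [max_eq_left hb]
    nlinarith [mul_le_mul_of_nonneg_left (add_one_le_exp (t * b)) hb]
  · rw [max_eq_right hb]
    nlinarith [exp_le_one_iff.2 (mul_nonpos_of_nonneg_of_nonpos ht hb)]

section BoundedExponent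

variable {α : Type*} [MeasurableSpace α] {μ : Measure α} [IsFiniteMeasure μ]
  {g : α → ℝ} {M : ℝ}

lemma integrableExpSet_eq_univ_of_abs_le_s15 (hg : Measurable g) (hM : ∀ y, |g y| ≤ M) :
    integrableExpSet g μ = univ := by
  refine eq_univ_of_forall fun t => Integrable.of_bound (hg.const_mul t).exp.aestronglyMeasurable
    (exp (|t| * M)) (ae_of_all _ fun y => ?_)
  rw [norm_of_nonneg (exp_pos _).le, exp_le_exp]
  calc t * g y ≤ |t| * |g y| := (le_abs_self _).trans (abs_mul _ _).le
    _ ≤ |t| * M := mul_le_mul_of_nonneg_left (hM y) (abs_nonneg t)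

lemma hasDerivAt_integral_exp_mul_sub_one (hg : Measurable g) (hM : ∀ y, |g y| ≤ M) (t : ℝ) :
    HasDerivAt (fun t => ∫ y, (exp (t * g y) - 1) ∂μ) (∫ y, g y * exp (t * g y) ∂μ) t := by
  have hmgf : (fun t => ∫ y, (exp (t * g y) - 1) ∂μ) = fun t => mgf g μ t - μ.real univ := by
    ext t
    rw [integral_sub (integrable_of_mem_integrableExpSet
      (by simp [integrableExpSet_eq_univ_of_abs_le_s15 hg hM])) (integrable_const 1),
      integral_const, smul_eq_mul, mul_one, mgf]
  rw [hmgf]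
  exact (hasDerivAt_mgf (by simp [integrableExpSet_eq_univ_of_abs_le_s15 hg hM])).sub_const _

lemma integrable_mul_exp_mul_of_abs_le (hg : Measurable g) (hM : ∀ y, |g y| ≤ M) (t : ℝ) :
    Integrable (fun y => g y * exp (t * g y)) μ := by
  simpa using integrable_pow_mul_exp_of_mem_interior_integrableExpSet
    (by simp [integrableExpSet_eq_univ_of_abs_le_s15 hg hM] : t ∈ interior (integrableExpSet g μ)) 1

lemma strictMono_integral_mul_exp_mul (hg : Measurable g) (hM : ∀ y, |g y| ≤ M)
    (hpos : 0 < μ {y | 0 < g y}) : StrictMono fun t => ∫ y, g y * exp (t * g y) ∂μ := by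
  intro s t hst
  have hi (u : ℝ) := integrable_mul_exp_mul_of_abs_le (μ := μ) hg hM u
  rw [← sub_pos, ← integral_sub (hi t) (hi s), integral_pos_iff_support_of_nonneg
    (fun y => sub_nonneg.2 (mul_exp_mul_le_mul_exp_mul hst.le)) ((hi t).sub (hi s))]
  exact hpos.trans_le (measure_mono fun y hy => (sub_pos.2 (mul_exp_mul_lt_mul_exp_mul hy hst)).ne')

lemma tendsto_integral_mul_exp_mul_atTop (hg : Measurable g) (hM : ∀ y, |g y| ≤ M)
    (hpos : 0 < μ {y | 0 < g y}) :
    Tendsto (fun t => ∫ y, g y * exp (t * g y) ∂μ) atTop atTop := by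
  have hgi : Integrable g μ := Integrable.of_bound hg.aestronglyMeasurable M (ae_of_all _ hM)
  have hqi : Integrable (fun y => max (g y) 0 ^ 2) μ := by
    refine Integrable.of_bound ((hg.max measurable_const).pow_const 2).aestronglyMeasurable
      (M ^ 2) (ae_of_all _ fun y => ?_)
    rw [norm_of_nonneg (sq_nonneg _)]
    exact pow_le_pow_left₀ (le_max_right _ _)
      (max_le ((le_abs_self _).trans (hM y)) ((abs_nonneg _).trans (hM y))) 2
  have hq : 0 < ∫ y, max (g y) 0 ^ 2 ∂μ :=
    (integral_pos_iff_support_of_nonneg (fun y => sq_nonneg _) hqi).2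
      (hpos.trans_le (measure_mono fun y hy => (pow_pos (lt_max_of_lt_left hy) 2).ne'))
  refine tendsto_atTop_mono' _ ?_ (tendsto_atTop_add_const_left _ (∫ y, g y ∂μ)
    (tendsto_id.atTop_mul_const hq))
  filter_upwards [eventually_ge_atTop 0] with t ht
  calc ∫ y, g y ∂μ + id t * ∫ y, max (g y) 0 ^ 2 ∂μ
      = ∫ y, (g y + t * max (g y) 0 ^ 2) ∂μ := by
        rw [integral_add hgi (hqi.const_mul t), integral_const_mul, id]
    _ ≤ ∫ y, g y * exp (t * g y) ∂μ :=
        integral_mono (hgi.add (hqi.const_mul t)) (integrable_mul_exp_mul_of_abs_le hg hM t)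
          fun y => add_mul_sq_max_le_mul_exp_mul ht

end BoundedExponent

/-- Let λ, l > 0 and g : [0,l] → ℝ bounded measurable, with
Λ_{g,l}(t) = (λ/l)∫_0^l (e^{tg(y)}−1) dy. If θ > (λ/l)∫_0^l g and
|{y ∈ [0,l] : g(y) > 0}| > 0, then t ↦ θt − Λ_{g,l}(t) attains its supremum over ℝ
at a unique point t*, which lies in (0,∞) and satisfies
θ = Λ'_{g,l}(t*) = (λ/l)∫_0^l g(y)e^{t* g(y)} dy. -/
theorem stmt15
    (lam l : ℝ) (hlam : 0 < lam) (hl : 0 < l)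
    (g : ℝ → ℝ) (hgmeas : Measurable g) (M : ℝ) (hgbdd : ∀ y, |g y| ≤ M)
    (Λ : ℝ → ℝ)
    (hΛ : ∀ t, Λ t = (lam / l) * ∫ y in (0:ℝ)..l, (Real.exp (t * g y) - 1))
    (θ : ℝ) (hθ : (lam / l) * (∫ y in (0:ℝ)..l, g y) < θ)
    (hgpos : 0 < volume {y ∈ Set.Icc (0:ℝ) l | 0 < g y}) :
    ∃ tstar : ℝ,
      (0 < tstar) ∧
      (∀ t : ℝ, θ * t - Λ t ≤ θ * tstar - Λ tstar) ∧
      (∀ t : ℝ, (∀ s : ℝ, θ * s - Λ s ≤ θ * t - Λ t) → t = tstar) ∧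
      HasDerivAt Λ θ tstar ∧
      θ = (lam / l) * ∫ y in (0:ℝ)..l, g y * Real.exp (tstar * g y) := by
  set μ := volume.restrict (Icc 0 l)
  have hc : 0 < lam / l := div_pos hlam hl
  have hinterval (f : ℝ → ℝ) : ∫ y in (0:ℝ)..l, f y = ∫ y, f y ∂μ := by
    rw [intervalIntegral.integral_of_le hl.le, integral_Icc_eq_integral_Ioc]
  set Λ' := fun t => lam / l * ∫ y, g y * exp (t * g y) ∂μ
  have hderiv (t : ℝ) : HasDerivAt Λ (Λ' t) t := by
    rw [show Λ = fun t => lam / l * ∫ y, (exp (t * g y) - 1) ∂μ from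
      funext fun t => by rw [hΛ, hinterval]]
    exact (hasDerivAt_integral_exp_mul_sub_one hgmeas hgbdd t).const_mul _
  have hpos : 0 < μ {y | 0 < g y} := by
    rwa [Measure.restrict_apply (measurableSet_lt measurable_const hgmeas), inter_comm]
  have hmono : StrictMono Λ' := (strictMono_integral_mul_exp_mul hgmeas hgbdd hpos).const_mul hc
  have h0 : Λ' 0 < θ := by simpa [Λ', hinterval] using hθ
  obtain ⟨T, hT⟩ := (((tendsto_integral_mul_exp_mul_atTop hgmeas hgbdd hpos).const_mul_atTop
    hc).eventually_gt_atTop θ).exists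
  obtain ⟨tstar, htstar, htθ⟩ := exists_hasDerivWithinAt_eq_of_gt_of_lt
    (hmono.lt_iff_lt.1 (h0.trans hT)).le (fun t _ => (hderiv t).hasDerivWithinAt) h0 hT
  have hmax (t : ℝ) (ht : t ≠ tstar) := mul_sub_lt_of_strictMono_deriv hderiv hmono htθ ht
  refine ⟨tstar, htstar.1, fun t => ?_, fun t ht => ?_, htθ ▸ hderiv tstar,
    by rw [hinterval, ← htθ]⟩
  · rcases eq_or_ne t tstar with rfl | hne
    exacts [le_rfl, (hmax t hne).le]
  · by_contra hne
    exact (ht tstar).not_gt (hmax t hne)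
end

section
/- Suppose θ > (λ/l)∫_0^l g(y) dy and the Lebesgue measure of {y ∈ [0,l] : g(y) > 0} is positive, and let t* ∈ (0,∞) be the unique maximizer of t ↦ θt − Λ_{g,l}(t). Set K = λ∫_0^l e^{t* g(y)} dy and let μ be the probability measure on [0, l] with density y ↦ λe^{t* g(y)}/K with respect to Lebesgue measure. Then: (i) K = l(θt* − Λ*_{g,l}(θ) + λ); (ii) lθ = K ∫_0^l g dμ; and (iii) exp(l Λ*_{g,l}(θ)) · P{ Σ_{i=1}^{N} g(U_i) ≥ lθ } = e^{lθt*} Σ_{n=0}^{∞} e^{−K} (K^n/n!) E[ 1{Σ_{i=1}^{n} g(ξ_i) ≥ lθ} exp(−t* Σ_{i=1}^{n} g(ξ_i)) ], where ξ_1, ξ_2, … are i.i.d. with law μ. -/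
/-!
Parts (i) and (ii) are the value and the first-order condition at the maximiser `t*`: on
`ν = Leb|[0,l]` one has `Λ(t) = (λ/l) (∫ e^{t g} dν - l)`, so `Λ(t*) = K/l - λ`, and `Λ'(t*) = θ`
gives `lθ = λ ∫ g e^{t* g} dν = K ∫ g dμ'`.

For (iii), condition on `N = n`: the left side becomes a series with terms
`e^{-λl} (λl)ⁿ/n! · l⁻ⁿ · ν^{⊗n}{x | lθ ≤ ∑ g(xᵢ)}`. Under `μ'^{⊗n}` the weight `e^{-t* ∑ g(ξᵢ)}`
cancels the density `∏ λ e^{t* g(xᵢ)}/K`, so the `n`-th expectation on the right is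
`(λ/K)ⁿ ν^{⊗n}` of the same set. The prefactors agree since `lΛ*(θ) - λl = lθt* - K` by (i).
-/

open MeasureTheory Real ProbabilityTheory

open scoped ENNReal NNReal

namespace MeasureTheory.Measure

variable {α : Type*} [MeasurableSpace α]

theorem lintegral_fin_nat_prod_eq_prod {n : ℕ} (ν : Fin n → Measure α) [∀ i, SigmaFinite (ν i)]
    (f : Fin n → α → ℝ≥0∞) (hf : ∀ i, Measurable (f i)) :
    ∫⁻ x, ∏ i, f i (x i) ∂(Measure.pi ν) = ∏ i, ∫⁻ y, f i y ∂(ν i) := by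
  induction n with
  | zero => simp [Measure.pi_empty_univ]
  | succ n ih =>
    have hmp := (measurePreserving_piFinSuccAbove ν 0).symm
    rw [← hmp.lintegral_comp (f := fun x : Fin (n + 1) → α => ∏ i, f i (x i))
      (Finset.measurable_prod _ fun i _ => (hf i).comp (measurable_pi_apply i))]
    simp_rw [MeasurableEquiv.piFinSuccAbove_symm_apply, Fin.insertNthEquiv,
      Fin.prod_univ_succ, Fin.insertNth_zero, Equiv.coe_fn_mk, Fin.cons_zero, Fin.cons_succ,
      cast_eq, Fin.succAbove_zero]
    rw [lintegral_prod_mul (f := f 0) (g := fun y : Fin n → α => ∏ i, f i.succ (y i))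
      (hf 0).aemeasurable
      (Finset.measurable_prod _ fun i _ => (hf i.succ).comp (measurable_pi_apply i)).aemeasurable,
      ih (fun i => ν i.succ) (fun i => f i.succ) (fun i => hf i.succ)]

theorem pi_fin_withDensity {n : ℕ} (ν : Fin n → Measure α) [∀ i, SigmaFinite (ν i)]
    (ρ : Fin n → α → ℝ≥0∞) (hρ : ∀ i, Measurable (ρ i))
    [∀ i, SigmaFinite ((ν i).withDensity (ρ i))] :
    Measure.pi (fun i => (ν i).withDensity (ρ i))
      = (Measure.pi ν).withDensity (fun x => ∏ i, ρ i (x i)) := by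
  refine Measure.pi_eq fun s hs => ?_
  have hbox : (Set.univ.pi s).indicator (fun x => ∏ i, ρ i (x i))
      = fun x => ∏ i, (s i).indicator (ρ i) (x i) := by
    ext x
    classical
    simp only [Set.indicator_apply, Finset.prod_ite_zero]
    congr 1
    simp
  rw [withDensity_apply _ (.univ_pi hs), ← lintegral_indicator (.univ_pi hs), hbox,
    lintegral_fin_nat_prod_eq_prod ν _ fun i => (hρ i).indicator (hs i)]
  exact Finset.prod_congr rfl fun i _ => by
    rw [withDensity_apply _ (hs i), lintegral_indicator (hs i)]

theorem pi_smul_const {ι : Type*} [Fintype ι] (ν : ι → Measure α) [∀ i, SigmaFinite (ν i)]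
    (c : ℝ≥0∞) [∀ i, SigmaFinite (c • ν i)] :
    Measure.pi (fun i => c • ν i) = c ^ Fintype.card ι • Measure.pi ν := by
  refine Measure.pi_eq fun s hs => ?_
  simp [Measure.pi_pi, Finset.prod_mul_distrib]

end MeasureTheory.Measure

namespace ProbabilityTheory

variable {Ω β : Type*} [MeasurableSpace Ω] [MeasurableSpace β] {μ : Measure Ω}

theorem iIndepFun.map_fin_eq_pi [IsProbabilityMeasure μ] {U : ℕ → Ω → β}
    (hU : ∀ i, Measurable (U i)) (h : iIndepFun U μ) {ν : Measure β} [SigmaFinite ν]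
    (hlaw : ∀ i, μ.map (U i) = ν) (n : ℕ) :
    μ.map (fun ω (i : Fin n) => U i ω) = Measure.pi fun _ => ν := by
  rw [(h.precomp Fin.val_injective).map_fun_eq_pi_map fun i : Fin n => (hU i).aemeasurable]
  exact congrArg Measure.pi (funext fun i => hlaw i)

theorem measure_setOf_fin_mem_eq_tsum {N : Ω → ℕ} {U : ℕ → Ω → β} (hN : Measurable N)
    (hU : ∀ i, Measurable (U i)) (hNU : IndepFun N (fun ω i => U i ω) μ)
    (S : ∀ n, Set (Fin n → β)) (hS : ∀ n, MeasurableSet (S n)) :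
    μ {ω | (fun i : Fin (N ω) => U i ω) ∈ S (N ω)}
      = ∑' n, μ (N ⁻¹' {n}) * μ ((fun ω (i : Fin n) => U i ω) ⁻¹' S n) := by
  have hrestrict : ∀ n, Measurable fun (u : ℕ → β) (i : Fin n) => u i :=
    fun n => measurable_pi_lambda _ fun i => measurable_pi_apply _
  have hsplit : {ω | (fun i : Fin (N ω) => U i ω) ∈ S (N ω)}
      = ⋃ n, N ⁻¹' {n} ∩ (fun ω (i : Fin n) => U i ω) ⁻¹' S n := by
    ext ω
    simp only [Set.mem_ofPred_eq, Set.mem_iUnion, Set.mem_inter_iff, Set.mem_preimage,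
      Set.mem_singleton_iff]
    exact ⟨fun h => ⟨_, rfl, h⟩, by rintro ⟨n, rfl, h⟩; exact h⟩
  rw [hsplit, measure_iUnion]
  · exact tsum_congr fun n =>
      hNU.measure_inter_preimage_eq_mul _ _ (measurableSet_singleton n) ((hrestrict n) (hS n))
  · exact fun m n hmn => Set.disjoint_left.2 fun ω hm hn => hmn (hm.1.symm.trans hn.1)
  · exact fun n => (hN (measurableSet_singleton n)).inter
      ((measurable_pi_lambda _ fun i => hU i) ((hrestrict n) (hS n)))

theorem integrable_exp_mul_of_ae_abs_le [IsFiniteMeasure μ] {X : Ω → ℝ}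
    (hX : AEMeasurable X μ) {M : ℝ} (hM : ∀ᵐ ω ∂μ, |X ω| ≤ M) (t : ℝ) :
    Integrable (fun ω => exp (t * X ω)) μ :=
  integrable_exp_mul_of_mem_Icc hX (hM.mono fun _ h => abs_le.1 h)

theorem hasDerivAt_mgf_of_ae_abs_le [IsFiniteMeasure μ] {X : Ω → ℝ}
    (hX : AEMeasurable X μ) {M : ℝ} (hM : ∀ᵐ ω ∂μ, |X ω| ≤ M) (t : ℝ) :
    HasDerivAt (mgf X μ) μ[fun ω => X ω * exp (t * X ω)] t := by
  refine hasDerivAt_mgf ?_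
  rw [show integrableExpSet X μ = Set.univ from
    Set.eq_univ_of_forall (integrable_exp_mul_of_ae_abs_le hX hM)]
  simp

theorem integral_withDensity_ofReal_mul_exp {α : Type*} [MeasurableSpace α] (ν : Measure α)
    {h : α → ℝ} (hh : Measurable h) {c : ℝ} (hc : 0 ≤ c) (t : ℝ) (f : α → ℝ) :
    ∫ y, f y ∂ν.withDensity (fun y => ENNReal.ofReal (c * exp (t * h y)))
      = c * ∫ y, f y * exp (t * h y) ∂ν := by
  rw [integral_withDensity_eq_integral_toReal_smul (by fun_prop)
    (ae_of_all _ fun _ => ENNReal.ofReal_lt_top)]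
  simp_rw [ENNReal.toReal_ofReal (by positivity : 0 ≤ c * exp (t * h _)), smul_eq_mul, mul_assoc,
    mul_comm (exp _) (f _), integral_const_mul]

theorem setIntegral_exp_neg_sum_pi_tilted {α : Type*} [MeasurableSpace α] (ν : Measure α)
    [SigmaFinite ν] {h : α → ℝ} (hh : Measurable h) {c : ℝ} (hc : 0 ≤ c) (t : ℝ) {n : ℕ}
    {C : Set (Fin n → α)} (hC : MeasurableSet C) :
    ∫ x in C, exp (-(t * ∑ i, h (x i)))
        ∂(Measure.pi fun _ => ν.withDensity fun y => ENNReal.ofReal (c * exp (t * h y)))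
      = c ^ n * (Measure.pi fun _ => ν).real C := by
  rw [Measure.pi_fin_withDensity _ _ fun _ => by fun_prop,
    setIntegral_withDensity_eq_setIntegral_toReal_smul (by fun_prop)
      (ae_of_all _ fun x => ENNReal.prod_lt_top fun _ _ => ENNReal.ofReal_lt_top) _ hC]
  have hweight : ∀ x : Fin n → α,
      (∏ i, ENNReal.ofReal (c * exp (t * h (x i)))).toReal • exp (-(t * ∑ i, h (x i))) = c ^ n := by
    intro x
    simp only [ENNReal.toReal_prod, ENNReal.toReal_ofReal (by positivity : 0 ≤ c * exp _),
      Finset.prod_mul_distrib, Finset.prod_const, Finset.card_univ, Fintype.card_fin,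
      ← exp_sum, ← Finset.mul_sum, smul_eq_mul, mul_assoc, ← exp_add, add_neg_cancel, exp_zero,
      mul_one]
  rw [setIntegral_congr_fun hC fun x _ => hweight x, setIntegral_const, smul_eq_mul, mul_comm]

theorem integral_ite_exp_neg_sum_iid_tilted {Ω' α : Type*} [MeasurableSpace Ω'] [MeasurableSpace α]
    {P : Measure Ω'} [IsProbabilityMeasure P] (ν : Measure α) [SigmaFinite ν] {h : α → ℝ}
    (hh : Measurable h) {c : ℝ} (hc : 0 ≤ c) (t a : ℝ) {ξ : ℕ → Ω' → α}
    (hξ : ∀ i, Measurable (ξ i))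
    (hlaw : ∀ i, P.map (ξ i) = ν.withDensity fun y => ENNReal.ofReal (c * exp (t * h y)))
    (hindep : iIndepFun ξ P) (n : ℕ) :
    ∫ ω, (if a ≤ ∑ i ∈ Finset.range n, h (ξ i ω)
        then exp (-(t * ∑ i ∈ Finset.range n, h (ξ i ω))) else 0) ∂P
      = c ^ n * (Measure.pi fun _ : Fin n => ν).real {x | a ≤ ∑ i, h (x i)} := by
  have hC : MeasurableSet {x : Fin n → α | a ≤ ∑ i, h (x i)} :=
    measurableSet_le measurable_const (by fun_prop)
  have hcomp : (fun ω => if a ≤ ∑ i ∈ Finset.range n, h (ξ i ω)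
        then exp (-(t * ∑ i ∈ Finset.range n, h (ξ i ω))) else 0)
      = fun ω => {x : Fin n → α | a ≤ ∑ i, h (x i)}.indicator
          (fun x => exp (-(t * ∑ i, h (x i)))) fun i => ξ i ω := by
    ext ω
    simp only [Set.indicator_apply, Set.mem_ofPred_eq,
      Fin.sum_univ_eq_sum_range (fun i => h (ξ i ω))]
  rw [hcomp, ← integral_map (measurable_pi_lambda _ fun i : Fin n => hξ i).aemeasurable
      ((by fun_prop : Measurable fun x : Fin n → α => exp (-(t * ∑ i, h (x i)))).indicator
        hC).aestronglyMeasurable,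
    hindep.map_fin_eq_pi hξ hlaw n, integral_indicator hC,
    setIntegral_exp_neg_sum_pi_tilted ν hh hc t hC]

theorem toReal_measure_le_sum_range_eq_tsum {Ω β : Type*} [MeasurableSpace Ω] [MeasurableSpace β]
    {μ : Measure Ω} [IsProbabilityMeasure μ] {g : β → ℝ} (hg : Measurable g) (a : ℝ)
    {N : Ω → ℕ} (hN : Measurable N) {r : ℝ≥0} (hNlaw : μ.map N = poissonMeasure r)
    {U : ℕ → Ω → β} (hU : ∀ i, Measurable (U i)) {ν : Measure β} [SigmaFinite ν] {c : ℝ≥0∞}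
    (hUlaw : ∀ i, μ.map (U i) = c • ν) (hUindep : iIndepFun U μ)
    (hNU : IndepFun N (fun ω i => U i ω) μ) :
    (μ {ω | a ≤ ∑ i ∈ Finset.range (N ω), g (U i ω)}).toReal
      = ∑' n, exp (-r) * r ^ n / n.factorial
          * (c.toReal ^ n * (Measure.pi fun _ : Fin n => ν).real {x | a ≤ ∑ i, g (x i)}) := by
  have : IsProbabilityMeasure (c • ν) :=
    hUlaw 0 ▸ Measure.isProbabilityMeasure_map (hU 0).aemeasurable
  have hS : ∀ n, MeasurableSet {x : Fin n → β | a ≤ ∑ i, g (x i)} :=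
    fun n => measurableSet_le measurable_const (by fun_prop)
  have hevent : {ω | a ≤ ∑ i ∈ Finset.range (N ω), g (U i ω)}
      = {ω | (fun i : Fin (N ω) => U i ω) ∈ {x : Fin (N ω) → β | a ≤ ∑ i, g (x i)}} := by
    ext ω
    simp only [Set.mem_ofPred_eq, Fin.sum_univ_eq_sum_range (fun i => g (U i ω))]
  rw [hevent, measure_setOf_fin_mem_eq_tsum hN hU hNU _ hS,
    ENNReal.tsum_toReal_eq fun n => ENNReal.mul_ne_top (measure_ne_top _ _) (measure_ne_top _ _)]
  refine tsum_congr fun n => ?_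
  rw [ENNReal.toReal_mul, ← Measure.map_apply hN (measurableSet_singleton n), hNlaw,
    poissonMeasure_singleton, ENNReal.toReal_ofReal (by positivity),
    ← Measure.map_apply (measurable_pi_lambda _ fun i : Fin n => hU i) (hS n),
    hUindep.map_fin_eq_pi hU hUlaw n, Measure.pi_smul_const, Measure.smul_apply, smul_eq_mul,
    ENNReal.toReal_mul, ENNReal.toReal_pow, Fintype.card_fin, measureReal_def]

end ProbabilityTheory

noncomputable def poissonCumulant (lam l : ℝ) (g : ℝ → ℝ) (t : ℝ) : ℝ :=
  lam / l * ∫ y in (0:ℝ)..l, (exp (t * g y) - 1)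

section PoissonCumulant

variable {lam l : ℝ} {g : ℝ → ℝ}

theorem intervalIntegral_eq_integral_Icc (hl : 0 ≤ l) (f : ℝ → ℝ) :
    ∫ y in (0:ℝ)..l, f y = ∫ y in Set.Icc 0 l, f y := by
  rw [intervalIntegral.integral_of_le hl, integral_Icc_eq_integral_Ioc]

theorem poissonCumulant_eq_mgf (hl : 0 ≤ l) (hg : Measurable g) {M : ℝ} (hM : ∀ y, |g y| ≤ M)
    (t : ℝ) :
    poissonCumulant lam l g t = lam / l * (mgf g (volume.restrict (Set.Icc 0 l)) t - l) := by
  rw [poissonCumulant, intervalIntegral_eq_integral_Icc hl,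
    integral_sub (integrable_exp_mul_of_ae_abs_le hg.aemeasurable (ae_of_all _ hM) t)
      (integrable_const 1),
    integral_const, smul_eq_mul, mul_one, mgf]
  simp [hl]

theorem hasDerivAt_poissonCumulant (hl : 0 ≤ l) (hg : Measurable g) {M : ℝ}
    (hM : ∀ y, |g y| ≤ M) (t : ℝ) :
    HasDerivAt (poissonCumulant lam l g) (lam / l * ∫ y in Set.Icc 0 l, g y * exp (t * g y)) t := by
  rw [funext (poissonCumulant_eq_mgf hl hg hM)]
  exact ((hasDerivAt_mgf_of_ae_abs_le hg.aemeasurable (ae_of_all _ hM) t).sub_const l).const_mul _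

theorem mul_mgf_eq_of_forall_sub_poissonCumulant_le (hl : 0 < l) (hg : Measurable g) {M : ℝ}
    (hM : ∀ y, |g y| ≤ M) {θ t : ℝ}
    (hmax : ∀ s, θ * s - poissonCumulant lam l g s ≤ θ * t - poissonCumulant lam l g t) :
    lam * mgf g (volume.restrict (Set.Icc 0 l)) t
      = l * (θ * t - (⨆ s, θ * s - poissonCumulant lam l g s) + lam) := by
  rw [ciSup_eq_of_forall_le_of_forall_lt_exists_gt hmax fun _ hw => ⟨t, hw⟩,
    poissonCumulant_eq_mgf hl.le hg hM]
  field_simp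
  ring

theorem eq_integral_of_forall_sub_poissonCumulant_le (hl : 0 ≤ l) (hg : Measurable g) {M : ℝ}
    (hM : ∀ y, |g y| ≤ M) {θ t : ℝ}
    (hmax : ∀ s, θ * s - poissonCumulant lam l g s ≤ θ * t - poissonCumulant lam l g t) :
    θ = lam / l * ∫ y in Set.Icc 0 l, g y * exp (t * g y) := by
  have := IsLocalMax.hasDerivAt_eq_zero (Filter.Eventually.of_forall hmax)
    (((hasDerivAt_id t).const_mul θ).sub (hasDerivAt_poissonCumulant hl hg hM t))
  simp only [mul_one] at this
  linarith

end PoissonCumulant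

theorem stmt16_general
    {Ω : Type*} [MeasurableSpace Ω] (μ : Measure Ω) [IsProbabilityMeasure μ]
    {Ω' : Type*} [MeasurableSpace Ω'] (P : Measure Ω') [IsProbabilityMeasure P]
    (lam l : ℝ) (hlam : 0 < lam) (hl : 0 < l)
    (g : ℝ → ℝ) (hgmeas : Measurable g) (M : ℝ) (hgbdd : ∀ y, |g y| ≤ M)
    (N : Ω → ℕ) (hNmeas : Measurable N)
    (hN : Measure.map N μ = poissonMeasure (Real.toNNReal (lam * l)))
    (U : ℕ → Ω → ℝ) (hUmeas : ∀ i, Measurable (U i))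
    (hU : ∀ i, Measure.map (U i) μ
      = (ENNReal.ofReal l)⁻¹ • (volume.restrict (Set.Icc 0 l)))
    (hUindep : iIndepFun U μ)
    (hNU : IndepFun N (fun ω => (fun i => U i ω)) μ)
    (Λ : ℝ → ℝ)
    (hΛ : ∀ t, Λ t = (lam / l) * ∫ y in (0:ℝ)..l, (Real.exp (t * g y) - 1))
    (Λstar : ℝ → ℝ) (hΛstar : ∀ θ, Λstar θ = ⨆ t : ℝ, (θ * t - Λ t))
    (θ : ℝ)
    (tstar : ℝ)
    (htstar_max : ∀ t : ℝ, θ * t - Λ t ≤ θ * tstar - Λ tstar)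
    (K : ℝ) (hK : K = lam * ∫ y in (0:ℝ)..l, Real.exp (tstar * g y))
    (μ' : Measure ℝ)
    (hμ' : μ' = (volume.restrict (Set.Icc 0 l)).withDensity
        (fun y => ENNReal.ofReal (lam * Real.exp (tstar * g y) / K)))
    (ξ : ℕ → Ω' → ℝ) (hξmeas : ∀ i, Measurable (ξ i))
    (hξ : ∀ i, Measure.map (ξ i) P = μ')
    (hξindep : iIndepFun ξ P) :
    K = l * (θ * tstar - Λstar θ + lam) ∧
    l * θ = K * ∫ y, g y ∂μ' ∧
    Real.exp (l * Λstar θ)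
        * (μ {ω | l * θ ≤ ∑ i ∈ Finset.range (N ω), g (U i ω)}).toReal
      = Real.exp (l * θ * tstar)
        * ∑' n : ℕ, Real.exp (-K) * K ^ n / (n.factorial : ℝ)
            * ∫ ω', (if l * θ ≤ ∑ i ∈ Finset.range n, g (ξ i ω')
                then Real.exp (-(tstar * ∑ i ∈ Finset.range n, g (ξ i ω')))
                else 0) ∂P := by
  obtain rfl : Λ = poissonCumulant lam l g := funext hΛ
  set ν : Measure ℝ := volume.restrict (Set.Icc 0 l) with hν
  have hK_mgf : K = lam * mgf g ν tstar := by rw [hK, intervalIntegral_eq_integral_Icc hl.le, mgf]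
  have hK_pos : 0 < K := hK_mgf ▸ mul_pos hlam (mgf_pos' (by simp [hν, hl])
    (integrable_exp_mul_of_ae_abs_le hgmeas.aemeasurable (ae_of_all _ hgbdd) tstar))
  have part1 : K = l * (θ * tstar - Λstar θ + lam) := by
    rw [hΛstar, hK_mgf]
    exact mul_mgf_eq_of_forall_sub_poissonCumulant_le hl hgmeas hgbdd htstar_max
  have hμ'_tilted : μ' = ν.withDensity fun y => ENNReal.ofReal (lam / K * exp (tstar * g y)) := by
    simp_rw [hμ', mul_div_right_comm]
  have part2 : l * θ = K * ∫ y, g y ∂μ' := by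
    rw [hμ'_tilted, integral_withDensity_ofReal_mul_exp ν hgmeas (by positivity) tstar g,
      eq_integral_of_forall_sub_poissonCumulant_le hl.le hgmeas hgbdd htstar_max,
      ← mul_assoc, ← mul_assoc, mul_div_cancel₀ _ hl.ne', mul_div_cancel₀ _ hK_pos.ne']
  refine ⟨part1, part2, ?_⟩
  have hexp : exp (l * Λstar θ) * exp (-(lam * l)) = exp (l * θ * tstar) * exp (-K) := by
    rw [← exp_add, ← exp_add, part1]
    ring_nf
  rw [toReal_measure_le_sum_range_eq_tsum hgmeas _ hNmeas hN hUmeas hU hUindep hNU,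
    Real.coe_toNNReal _ (by positivity), ENNReal.toReal_inv, ENNReal.toReal_ofReal hl.le,
    ← tsum_mul_left, ← tsum_mul_left]
  refine tsum_congr fun n => ?_
  rw [integral_ite_exp_neg_sum_iid_tilted ν hgmeas (by positivity) tstar (l * θ) hξmeas
    (hμ'_tilted ▸ hξ) hξindep n]
  calc _ = exp (l * Λstar θ) * exp (-(lam * l)) * (lam ^ n / n.factorial
        * (Measure.pi fun _ : Fin n => ν).real {x | l * θ ≤ ∑ i, g (x i)}) := by
        rw [mul_pow, inv_pow]
        field_simp
    _ = _ := by
        rw [hexp, div_pow]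
        field_simp

/-- Same setup as Statement 14. Let t* ∈ (0,∞) be the unique maximizer of
t ↦ θt − Λ_{g,l}(t), K = λ∫_0^l e^{t* g(y)} dy, and let μ' be the probability measure on
[0,l] with density y ↦ λ e^{t* g(y)}/K. Then (i) K = l(θt* − Λ*_{g,l}(θ) + λ),
(ii) lθ = K ∫ g dμ', and (iii) exp(l Λ*_{g,l}(θ)) · P{Σ_{i=1}^N g(U_i) ≥ lθ}
= e^{lθt*} Σ_{n=0}^∞ e^{−K} K^n/n! · E[1{Σ_{i=1}^n g(ξ_i) ≥ lθ} exp(−t* Σ_{i=1}^n g(ξ_i))],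
where the ξ_i are i.i.d. with law μ'. -/
theorem stmt16
    {Ω : Type*} [MeasurableSpace Ω] (μ : Measure Ω) [IsProbabilityMeasure μ]
    {Ω' : Type*} [MeasurableSpace Ω'] (P : Measure Ω') [IsProbabilityMeasure P]
    (lam l : ℝ) (hlam : 0 < lam) (hl : 0 < l)
    (g : ℝ → ℝ) (hgmeas : Measurable g) (M : ℝ) (hgbdd : ∀ y, |g y| ≤ M)
    (N : Ω → ℕ) (hNmeas : Measurable N)
    (hN : Measure.map N μ = poissonMeasure (Real.toNNReal (lam * l)))
    (U : ℕ → Ω → ℝ) (hUmeas : ∀ i, Measurable (U i))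
    (hU : ∀ i, Measure.map (U i) μ
      = (ENNReal.ofReal l)⁻¹ • (volume.restrict (Set.Icc 0 l)))
    (hUindep : iIndepFun U μ)
    (hNU : IndepFun N (fun ω => (fun i => U i ω)) μ)
    (Λ : ℝ → ℝ)
    (hΛ : ∀ t, Λ t = (lam / l) * ∫ y in (0:ℝ)..l, (Real.exp (t * g y) - 1))
    (Λstar : ℝ → ℝ) (hΛstar : ∀ θ, Λstar θ = ⨆ t : ℝ, (θ * t - Λ t))
    (θ : ℝ) (hθ : (lam / l) * (∫ y in (0:ℝ)..l, g y) < θ)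
    (hgpos : 0 < volume {y ∈ Set.Icc (0:ℝ) l | 0 < g y})
    (tstar : ℝ) (htstar_pos : 0 < tstar)
    (htstar_max : ∀ t : ℝ, θ * t - Λ t ≤ θ * tstar - Λ tstar)
    (K : ℝ) (hK : K = lam * ∫ y in (0:ℝ)..l, Real.exp (tstar * g y))
    (μ' : Measure ℝ)
    (hμ' : μ' = (volume.restrict (Set.Icc 0 l)).withDensity
        (fun y => ENNReal.ofReal (lam * Real.exp (tstar * g y) / K)))
    (ξ : ℕ → Ω' → ℝ) (hξmeas : ∀ i, Measurable (ξ i))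
    (hξ : ∀ i, Measure.map (ξ i) P = μ')
    (hξindep : iIndepFun ξ P) :
    K = l * (θ * tstar - Λstar θ + lam) ∧
    l * θ = K * ∫ y, g y ∂μ' ∧
    Real.exp (l * Λstar θ)
        * (μ {ω | l * θ ≤ ∑ i ∈ Finset.range (N ω), g (U i ω)}).toReal
      = Real.exp (l * θ * tstar)
        * ∑' n : ℕ, Real.exp (-K) * K ^ n / (n.factorial : ℝ)
            * ∫ ω', (if l * θ ≤ ∑ i ∈ Finset.range n, g (ξ i ω')
                then Real.exp (-(tstar * ∑ i ∈ Finset.range n, g (ξ i ω')))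
                else 0) ∂P :=
  stmt16_general μ P lam l hlam hl g hgmeas M hgbdd N hNmeas hN U hUmeas hU hUindep hNU Λ hΛ Λstar
    hΛstar θ tstar htstar_max K hK μ' hμ' ξ hξmeas hξ hξindep
end

section
/- For every δ > 0 there exist a constant c > 0 and K₀ > 0 such that for all real K ≥ K₀, Σ_{n ∈ ℕ, K ≤ n ≤ K + δ√K} e^{−K} K^n / n! ≥ c. -/
/-!
Stirling's upper bound `n! ≤ e √n (n/e)^n` and `log y ≥ 1 - 1/y` give, for every `n ≥ 1`,
`e^{-K} K^n / n! ≥ exp (-(n - K)^2 / K) / (e √n)`. On the window `K ≤ n ≤ K + δ√K` the exponent is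
at least `-δ²` and `√n ≤ 2√K`, so each of the at least `δ√K / 2` terms in the window is at least
`e^{-δ²} / (2e√K)`, and the sum is at least `δ e^{-δ²} / (4e)`.
-/

open Real Finset
open scoped Nat

lemma stirlingSeq_le_stirlingSeq_one {n : ℕ} (hn : n ≠ 0) :
    Stirling.stirlingSeq n ≤ exp 1 / √2 := by
  obtain ⟨m, rfl⟩ := Nat.exists_eq_succ_of_ne_zero hn
  simpa using Stirling.stirlingSeq'_antitone (Nat.zero_le m)

lemma factorial_le_exp_one_mul_sqrt_mul {n : ℕ} (hn : n ≠ 0) :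
    (n ! : ℝ) ≤ exp 1 * √n * (n / exp 1) ^ n := by
  have hn0 : (0 : ℝ) < n := by positivity
  have h := stirlingSeq_le_stirlingSeq_one hn
  rw [Stirling.stirlingSeq, div_le_iff₀ (by positivity)] at h
  calc (n ! : ℝ) ≤ exp 1 / √2 * (√(2 * n) * (n / exp 1) ^ n) := h
    _ = _ := by rw [sqrt_mul zero_le_two]; field_simp

lemma neg_sq_sub_div_le_sub_add_mul_log_div {x K : ℝ} (hx : 0 < x) (hK : 0 < K) :
    -((x - K) ^ 2 / K) ≤ x - K + x * log (K / x) := by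
  have hlog : 1 - x / K ≤ log (K / x) := by
    simpa using one_sub_inv_le_log_of_pos (div_pos hK hx)
  calc -((x - K) ^ 2 / K) = x - K + x * (1 - x / K) := by field_simp; ring
    _ ≤ x - K + x * log (K / x) := by gcongr

lemma exp_neg_sq_sub_div_le_poisson {K : ℝ} (hK : 0 < K) {n : ℕ} (hn : n ≠ 0) :
    exp (-((n - K) ^ 2 / K)) / (exp 1 * √n) ≤ exp (-K) * K ^ n / n ! := by
  have hn0 : (0 : ℝ) < n := by positivity
  have hpow : exp (n * log (K / n)) = (K / n) ^ n := by
    rw [exp_nat_mul, exp_log (by positivity)]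
  calc exp (-((n - K) ^ 2 / K)) / (exp 1 * √n)
      ≤ exp (n - K + n * log (K / n)) / (exp 1 * √n) := by
        gcongr; exact neg_sq_sub_div_le_sub_add_mul_log_div hn0 hK
    _ = exp (-K) * K ^ n / (exp 1 * √n * (n / exp 1) ^ n) := by
        rw [exp_add, exp_sub, exp_neg, hpow, ← exp_one_pow, div_pow, div_pow]; field_simp
    _ ≤ exp (-K) * K ^ n / n ! := by
        gcongr; exact factorial_le_exp_one_mul_sqrt_mul hn

lemma poisson_ge_of_le_of_le_add_mul_sqrt {δ K : ℝ} (hK : 0 < K) (hδK : δ ^ 2 ≤ K) {n : ℕ}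
    (hKn : K ≤ n) (hnK : n ≤ K + δ * √K) :
    exp (-(δ ^ 2)) / (2 * exp 1 * √K) ≤ exp (-K) * K ^ n / n ! := by
  have hn : n ≠ 0 := by rintro rfl; simp only [Nat.cast_zero] at hKn; linarith
  have hsqK := sq_sqrt hK.le
  have hdev : (n - K) ^ 2 / K ≤ δ ^ 2 := by
    rw [div_le_iff₀ hK]; nlinarith [sqrt_nonneg K]
  have hsqrt : √n ≤ 2 * √K := by
    rw [show 2 * √K = √(4 * K) by rw [sqrt_mul zero_le_four]; norm_num]
    gcongr; nlinarith [sqrt_nonneg K]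
  calc exp (-(δ ^ 2)) / (2 * exp 1 * √K) = exp (-(δ ^ 2)) / (exp 1 * (2 * √K)) := by ring
    _ ≤ exp (-((n - K) ^ 2 / K)) / (exp 1 * √n) := by gcongr
    _ ≤ _ := exp_neg_sq_sub_div_le_poisson hK hn

lemma sub_one_lt_card_Icc_ceil_floor {a L : ℝ} (ha : 0 ≤ a) (hL : 0 ≤ L) :
    L - 1 < #(Icc ⌈a⌉₊ ⌊a + L⌋₊) := by
  have hceil : ⌈a⌉₊ ≤ ⌊a + L⌋₊ + 1 :=
    Nat.ceil_le.2 (by push_cast; linarith [Nat.lt_floor_add_one (a + L)])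
  rw [Nat.card_Icc, Nat.cast_sub hceil, Nat.cast_add, Nat.cast_one]
  linarith [Nat.ceil_lt_add_one ha, Nat.sub_one_lt_floor (a + L)]

lemma sum_le_tsum_ite {ι : Type*} {p : ι → Prop} [DecidablePred p] {f : ι → ℝ} {s : Finset ι}
    (hs : ∀ i ∈ s, p i) (hf : 0 ≤ f) (hsum : Summable f) :
    ∑ i ∈ s, f i ≤ ∑' i, if p i then f i else 0 := by
  have hite_nonneg (i : ι) : 0 ≤ if p i then f i else 0 := by
    split_ifs
    exacts [hf i, le_rfl]
  have hite_le (i : ι) : (if p i then f i else 0) ≤ f i := by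
    split_ifs
    exacts [le_rfl, hf i]
  calc ∑ i ∈ s, f i = ∑ i ∈ s, if p i then f i else 0 :=
        sum_congr rfl fun i hi => (if_pos (hs i hi)).symm
    _ ≤ _ := (hsum.of_nonneg_of_le hite_nonneg hite_le).sum_le_tsum _ fun i _ => hite_nonneg i

/-- For every δ > 0 there exist c > 0 and K₀ > 0 such that for all real
K ≥ K₀, Σ_{n ∈ ℕ, K ≤ n ≤ K + δ√K} e^{−K} K^n / n! ≥ c. -/
theorem stmt17 (δ : ℝ) (hδ : 0 < δ) :
    ∃ c > (0 : ℝ), ∃ K₀ > (0 : ℝ), ∀ K : ℝ, K₀ ≤ K →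
      c ≤ ∑' n : ℕ,
        (if K ≤ (n : ℝ) ∧ (n : ℝ) ≤ K + δ * Real.sqrt K
          then Real.exp (-K) * K ^ n / (n.factorial : ℝ) else 0) := by
  refine ⟨δ * exp (-(δ ^ 2)) / (4 * exp 1), by positivity, δ ^ 2 + 4 / δ ^ 2, by positivity,
    fun K hK => ?_⟩
  have h4δ : 0 < 4 / δ ^ 2 := by positivity
  have hK0 : 0 < K := by linarith [sq_nonneg δ]
  have hwidth : 2 ≤ δ * √K := by
    have : 2 / δ ≤ √K := le_sqrt_of_sq_le (by rw [div_pow]; norm_num; linarith [sq_nonneg δ])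
    rwa [div_le_iff₀' hδ] at this
  set window := Icc ⌈K⌉₊ ⌊K + δ * √K⌋₊
  have hcard : δ * √K / 2 ≤ #window := by
    linarith [sub_one_lt_card_Icc_ceil_floor hK0.le (by positivity : 0 ≤ δ * √K)]
  have hmem : ∀ n ∈ window, K ≤ n ∧ n ≤ K + δ * √K := fun n hn =>
    ⟨Nat.ceil_le.1 (mem_Icc.1 hn).1, (Nat.le_floor_iff (by positivity)).1 (mem_Icc.1 hn).2⟩
  have hterm : ∀ n ∈ window, exp (-(δ ^ 2)) / (2 * exp 1 * √K) ≤ exp (-K) * K ^ n / n ! :=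
    fun n hn => poisson_ge_of_le_of_le_add_mul_sqrt hK0 (by linarith) (hmem n hn).1 (hmem n hn).2
  calc δ * exp (-(δ ^ 2)) / (4 * exp 1)
      = (δ * √K / 2) * (exp (-(δ ^ 2)) / (2 * exp 1 * √K)) := by field_simp; ring
    _ ≤ #window * (exp (-(δ ^ 2)) / (2 * exp 1 * √K)) := by gcongr
    _ ≤ ∑ n ∈ window, exp (-K) * K ^ n / n ! := by simpa using card_nsmul_le_sum _ _ _ hterm
    _ ≤ _ := sum_le_tsum_ite hmem (fun n => by positivity)
        (((summable_pow_div_factorial K).mul_left (exp (-K))).congr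
          fun n => (mul_div_assoc _ _ _).symm)
end

section
/- Let 0 < x₁ < x₂ < … < x_N < n with N ≥ 1, set x₀ = 0 and x_{N+1} = n, and let S = {x₁, …, x_N}. Then ∫_0^n g(d(y, S)) dy = 2 Σ_{i=0}^{N} G((x_{i+1} − x_i)/2) + G(x₁) + G(n − x_N) − 2G(x₁/2) − 2G((n − x_N)/2), where d(y, S) = min_{1 ≤ i ≤ N} |y − x_i|. -/
/-!
On each gap `[xᵢ, xᵢ₊₁]` the distance to `S` is the distance to the nearer endpoint of the gap,
except on the two outer gaps, which have a single endpoint in `S`. An inner gap of length `ℓ`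
therefore contributes `2 G(ℓ/2)` (two mirror-image ramps of height `ℓ/2`), while the outer gaps
contribute `G(x₁)` and `G(L - x_N)`; the formula rewrites this as a sum over all gaps corrected
by the two outer terms.
-/

open MeasureTheory Real Set

def distToNodes (x : ℕ → ℝ) {N : ℕ} (h : (Finset.Icc 1 N).Nonempty) (y : ℝ) : ℝ :=
  (Finset.Icc 1 N).inf' h fun i => |y - x i|

section DistToNodes

variable {x : ℕ → ℝ} {N : ℕ} (h : (Finset.Icc 1 N).Nonempty) {y : ℝ}

theorem continuous_distToNodes : Continuous (distToNodes x h) :=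
  Continuous.finset_inf'_apply _ fun _ _ => (continuous_id.sub continuous_const).abs

theorem distToNodes_le {i : ℕ} (hi : i ∈ Finset.Icc 1 N) : distToNodes x h y ≤ |y - x i| :=
  Finset.inf'_le _ hi

theorem distToNodes_eq_of_le_first (hx : MonotoneOn x (Icc 1 N)) (hy : y ≤ x 1) :
    distToNodes x h y = x 1 - y := by
  have hN : 1 ≤ N := Finset.nonempty_Icc.1 h
  refine le_antisymm ?_ (Finset.le_inf' _ _ fun j hj => ?_)
  · exact (distToNodes_le h (Finset.mem_Icc.2 ⟨le_rfl, hN⟩)).trans_eq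
      (by rw [abs_sub_comm, abs_of_nonneg (sub_nonneg.2 hy)])
  · rw [Finset.mem_Icc] at hj
    have := hx ⟨le_rfl, hN⟩ hj hj.1
    rw [abs_of_nonpos (by linarith)]
    linarith

theorem distToNodes_eq_of_last_le (hx : MonotoneOn x (Icc 1 N)) (hy : x N ≤ y) :
    distToNodes x h y = y - x N := by
  have hN : 1 ≤ N := Finset.nonempty_Icc.1 h
  refine le_antisymm ?_ (Finset.le_inf' _ _ fun j hj => ?_)
  · exact (distToNodes_le h (Finset.mem_Icc.2 ⟨hN, le_rfl⟩)).trans_eq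
      (abs_of_nonneg (sub_nonneg.2 hy))
  · rw [Finset.mem_Icc] at hj
    have := hx hj ⟨hN, le_rfl⟩ hj.2
    rw [abs_of_nonneg (by linarith)]
    linarith

theorem distToNodes_eq_of_mem_gap (hx : MonotoneOn x (Icc 1 N)) {i : ℕ} (hi : 1 ≤ i)
    (hiN : i < N) (hy : y ∈ Icc (x i) (x (i + 1))) :
    distToNodes x h y = min (y - x i) (x (i + 1) - y) := by
  have hi_mem : i ∈ Icc 1 N := ⟨hi, hiN.le⟩
  have hi_succ_mem : i + 1 ∈ Icc 1 N := ⟨by omega, hiN⟩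
  refine le_antisymm (le_min ?_ ?_) (Finset.le_inf' _ _ fun j hj => ?_)
  · exact (distToNodes_le h (Finset.mem_Icc.2 hi_mem)).trans_eq
      (abs_of_nonneg (sub_nonneg.2 hy.1))
  · exact (distToNodes_le h (Finset.mem_Icc.2 hi_succ_mem)).trans_eq
      (by rw [abs_sub_comm, abs_of_nonneg (sub_nonneg.2 hy.2)])
  rw [Finset.mem_Icc] at hj
  rcases le_or_gt j i with hji | hij
  · have := hx hj hi_mem hji
    exact (min_le_left _ _).trans (by rw [abs_of_nonneg (by linarith [hy.1])]; linarith)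
  · have := hx hi_succ_mem hj hij
    exact (min_le_right _ _).trans (by rw [abs_of_nonpos (by linarith [hy.2])]; linarith)

end DistToNodes

section Integrals

variable {g : ℝ → ℝ} {M : ℝ}

theorem intervalIntegrable_comp_of_abs_le (hg : Measurable g) (hM : ∀ y, |g y| ≤ M)
    {φ : ℝ → ℝ} (hφ : Measurable φ) (a b : ℝ) :
    IntervalIntegrable (fun y => g (φ y)) volume a b := by
  constructor <;>
  · refine Measure.integrableOn_of_bounded (M := M) measure_Ioc_lt_top.ne
      (hg.comp hφ).aestronglyMeasurable (Filter.Eventually.of_forall fun y => ?_)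
    simpa [Real.norm_eq_abs] using hM (φ y)

theorem integral_comp_min_sub_sub (hg : Measurable g) (hM : ∀ y, |g y| ≤ M) {a b : ℝ}
    (hab : a ≤ b) :
    ∫ y in a..b, g (min (y - a) (b - y)) = 2 * ∫ s in 0..(b - a) / 2, g s := by
  set m := (a + b) / 2 with hm
  have hφ : Measurable fun y => min (y - a) (b - y) := by fun_prop
  rw [← intervalIntegral.integral_add_adjacent_intervals (b := m)
    (intervalIntegrable_comp_of_abs_le hg hM hφ a m)
    (intervalIntegrable_comp_of_abs_le hg hM hφ m b)]
  have left : ∫ y in a..m, g (min (y - a) (b - y)) = ∫ y in a..m, g (y - a) := by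
    refine intervalIntegral.integral_congr fun y hy => ?_
    rw [uIcc_of_le (by rw [hm]; linarith)] at hy
    simp only [min_eq_left (show y - a ≤ b - y by rw [hm] at hy; linarith [hy.2])]
  have right : ∫ y in m..b, g (min (y - a) (b - y)) = ∫ y in m..b, g (b - y) := by
    refine intervalIntegral.integral_congr fun y hy => ?_
    rw [uIcc_of_le (by rw [hm]; linarith)] at hy
    simp only [min_eq_right (show b - y ≤ y - a by rw [hm] at hy; linarith [hy.1])]
  rw [left, right, intervalIntegral.integral_comp_sub_right,
    intervalIntegral.integral_comp_sub_left, sub_self, sub_self,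
    show m - a = (b - a) / 2 by ring, show b - m = (b - a) / 2 by ring]
  ring

theorem integral_distToNodes_of_le_first {x : ℕ → ℝ} {N : ℕ} (h : (Finset.Icc 1 N).Nonempty)
    (hx : MonotoneOn x (Icc 1 N)) {a : ℝ} (ha : a ≤ x 1) :
    ∫ y in a..x 1, g (distToNodes x h y) = ∫ s in 0..x 1 - a, g s := by
  rw [intervalIntegral.integral_congr (g := fun y => g (x 1 - y)) fun y hy => by
    rw [uIcc_of_le ha] at hy
    simp only [distToNodes_eq_of_le_first h hx hy.2]]
  rw [intervalIntegral.integral_comp_sub_left, sub_self]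

theorem integral_distToNodes_of_last_le {x : ℕ → ℝ} {N : ℕ} (h : (Finset.Icc 1 N).Nonempty)
    (hx : MonotoneOn x (Icc 1 N)) {b : ℝ} (hb : x N ≤ b) :
    ∫ y in x N..b, g (distToNodes x h y) = ∫ s in 0..b - x N, g s := by
  rw [intervalIntegral.integral_congr (g := fun y => g (y - x N)) fun y hy => by
    rw [uIcc_of_le hb] at hy
    simp only [distToNodes_eq_of_last_le h hx hy.1]]
  rw [intervalIntegral.integral_comp_sub_right, sub_self]

theorem integral_distToNodes_of_mem_gap (hg : Measurable g) (hM : ∀ y, |g y| ≤ M)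
    {x : ℕ → ℝ} {N : ℕ} (h : (Finset.Icc 1 N).Nonempty) (hx : MonotoneOn x (Icc 1 N))
    {i : ℕ} (hi : 1 ≤ i) (hiN : i < N) :
    ∫ y in x i..x (i + 1), g (distToNodes x h y) = 2 * ∫ s in 0..(x (i + 1) - x i) / 2, g s := by
  have hle : x i ≤ x (i + 1) := hx ⟨hi, hiN.le⟩ ⟨by omega, hiN⟩ (Nat.le_succ i)
  rw [← integral_comp_min_sub_sub hg hM hle]
  refine intervalIntegral.integral_congr fun y hy => ?_
  rw [uIcc_of_le hle] at hy
  simp only [distToNodes_eq_of_mem_gap h hx hi hiN hy]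

end Integrals

/-- Let g be bounded measurable on [0,∞) with G(x) = ∫_0^x g. Let
0 < x₁ < … < x_N < L (N ≥ 1), x₀ = 0, x_{N+1} = L, S = {x₁,…,x_N} and
d(y,S) = min_{1≤i≤N}|y − x_i|. Then ∫_0^L g(d(y,S)) dy
= 2Σ_{i=0}^N G((x_{i+1}−x_i)/2) + G(x₁) + G(L−x_N) − 2G(x₁/2) − 2G((L−x_N)/2). -/
theorem stmt18
    (g : ℝ → ℝ) (hgmeas : Measurable g) (M : ℝ) (hgbdd : ∀ y, |g y| ≤ M)
    (G : ℝ → ℝ) (hG : ∀ x, G x = ∫ s in (0:ℝ)..x, g s)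
    (N : ℕ) (hN : 1 ≤ N) (L : ℝ) (x : ℕ → ℝ)
    (hx0 : x 0 = 0) (hxlast : x (N + 1) = L)
    (hmono : ∀ i ≤ N, x i < x (i + 1)) :
    (∫ y in (0:ℝ)..L,
        g ((Finset.Icc 1 N).inf' (Finset.nonempty_Icc.2 hN) (fun i => |y - x i|)))
      = 2 * (∑ i ∈ Finset.range (N + 1), G ((x (i + 1) - x i) / 2))
        + G (x 1) + G (L - x N) - 2 * G (x 1 / 2) - 2 * G ((L - x N) / 2) := by
  have hne := Finset.nonempty_Icc.2 hN
  have hx : MonotoneOn x (Icc 1 N) := monotoneOn_of_le_succ ordConnected_Icc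
    fun i _ hi _ => by simpa using (hmono i hi.2).le
  have hint (a b : ℝ) : IntervalIntegrable (fun y => g (distToNodes x hne y)) volume a b :=
    intervalIntegrable_comp_of_abs_le hgmeas hgbdd (continuous_distToNodes hne).measurable a b
  have hsplit : ∫ y in (0:ℝ)..L, g (distToNodes x hne y)
      = ∑ k ∈ Finset.range (N + 1), ∫ y in x k..x (k + 1), g (distToNodes x hne y) := by
    rw [intervalIntegral.sum_integral_adjacent_intervals fun k _ => hint _ _, hx0, hxlast]
  have first : ∫ y in x 0..x 1, g (distToNodes x hne y) = G (x 1) := by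
    rw [integral_distToNodes_of_le_first hne hx (hmono 0 (Nat.zero_le N)).le, hx0,
      sub_zero, hG]
  have last : ∫ y in x N..x (N + 1), g (distToNodes x hne y) = G (L - x N) := by
    rw [integral_distToNodes_of_last_le hne hx (hmono N le_rfl).le, hxlast, hG]
  obtain ⟨n, rfl⟩ := Nat.exists_eq_add_of_le' hN
  have inner : ∑ k ∈ Finset.range n, ∫ y in x (k + 1)..x (k + 1 + 1), g (distToNodes x hne y)
      = 2 * ∑ k ∈ Finset.range n, G ((x (k + 1 + 1) - x (k + 1)) / 2) := by
    rw [Finset.mul_sum]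
    refine Finset.sum_congr rfl fun k hk => ?_
    rw [integral_distToNodes_of_mem_gap hgmeas hgbdd hne hx (by omega)
      (by simpa using Finset.mem_range.1 hk), hG]
  change ∫ y in (0:ℝ)..L, g (distToNodes x hne y) = _
  rw [hsplit, Finset.sum_range_succ, Finset.sum_range_succ', Finset.sum_range_succ,
    Finset.sum_range_succ', first, last, inner, hx0, hxlast, sub_zero]
  ring
end
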